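/- arXiv:1101.4969 — 5 statements merged into one kernel-verified Lean document; each statement's English description precedes it below -/
import Mathlib

section
/- The function F(t,r) = (t−r)^ρ · |log(t−r)|^η, for ρ > 0 and η ∈ ℝ, restricted to a neighborhood of the diagonal where t−r ∈ (0,1), is a function of smooth variation of index ρ at the diagonal, i.e., it satisfies conditions (a)–(d) of the definition of SR²_ρ(0+) uniformly on compacts. -/
/-! `F(t,r) = G(t - r)` depends only on `t - r`, so the four ratios do not depend on `t` and
reduce to the one-variable limits `x G'(x) / G(x) → ρ` and `x² G''(x) / G(x) → ρ(ρ-1)` as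
`x ↓ 0`. For `G(x) = x^ρ |log x|^η` the logarithmic derivative is `x G'/G = φ := ρ + η / log x`,
hence `x² G''/G = φ² - φ + x φ' = φ² - φ - η / (log x)²`, and both tend to the right limits
because `1 / log x → 0`. -/

open MeasureTheory Filter Set intervalIntegral Real

/-- `p01 F t r = ∂F/∂r (t,r)` -/
noncomputable def p01 (F : ℝ → ℝ → ℝ) (t r : ℝ) : ℝ := deriv (fun x => F t x) r
/-- `p10 F t r = ∂F/∂t (t,r)` -/
noncomputable def p10 (F : ℝ → ℝ → ℝ) (t r : ℝ) : ℝ := deriv (fun x => F x r) t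
/-- `p11 F t r = ∂²F/∂t∂r (t,r)` -/
noncomputable def p11 (F : ℝ → ℝ → ℝ) (t r : ℝ) : ℝ := deriv (fun x => p01 F x r) t
/-- `p02 F t r = ∂²F/∂r² (t,r)` -/
noncomputable def p02 (F : ℝ → ℝ → ℝ) (t r : ℝ) : ℝ := deriv (fun x => p01 F t x) r

/-- `lim_{h↓0} sup_{t∈K} |G h t + c| = 0` for every compact `K ⊂ ℝ`. -/
def UnifDiagLimit (G : ℝ → ℝ → ℝ) (c : ℝ) : Prop :=
  ∀ K : Set ℝ, IsCompact K → ∀ ε > 0, ∃ h₀ > 0, ∀ h : ℝ, 0 < h → h < h₀ →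
    ∀ t ∈ K, |G h t + c| < ε

/-- `F ∈ SR²_ρ(0+)` : a function of smooth variation of index `ρ` at the diagonal. -/
def SmoothVar (F : ℝ → ℝ → ℝ) (ρ : ℝ) : Prop :=
  ContinuousOn (fun p : ℝ × ℝ => F p.1 p.2) {p : ℝ × ℝ | p.2 ≤ p.1} ∧
  ContDiffOn ℝ 2 (fun p : ℝ × ℝ => F p.1 p.2) {p : ℝ × ℝ | p.2 < p.1} ∧
  (∀ t r : ℝ, r < t → 0 < F t r) ∧
  UnifDiagLimit (fun h t => h * p01 F t (t - h) / F t (t - h)) ρ ∧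
  UnifDiagLimit (fun h t => h * p10 F (t + h) t / F (t + h) t) (-ρ) ∧
  UnifDiagLimit (fun h t => h ^ 2 * p11 F t (t - h) / F t (t - h)) (ρ * (ρ - 1)) ∧
  UnifDiagLimit (fun h t => h ^ 2 * p02 F t (t - h) / F t (t - h)) (-(ρ * (ρ - 1)))

open Topology

section DifferenceKernel

variable (G : ℝ → ℝ) (t r : ℝ)

lemma p01_comp_sub : p01 (fun t r => G (t - r)) t r = -deriv G (t - r) :=
  deriv_comp_const_sub G t r

lemma p10_comp_sub : p10 (fun t r => G (t - r)) t r = deriv G (t - r) :=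
  deriv_comp_sub_const G r t

lemma p11_comp_sub : p11 (fun t r => G (t - r)) t r = -deriv (deriv G) (t - r) := by
  simp only [p11, p01_comp_sub, deriv.fun_neg, deriv_comp_sub_const]

lemma p02_comp_sub : p02 (fun t r => G (t - r)) t r = deriv (deriv G) (t - r) := by
  simp only [p02, p01_comp_sub, deriv.fun_neg, deriv_comp_const_sub, neg_neg]

end DifferenceKernel

lemma unifDiagLimit_of_tendsto {φ : ℝ → ℝ} {c : ℝ} (hφ : Tendsto φ (𝓝[>] 0) (𝓝 (-c))) :
    UnifDiagLimit (fun h _ => φ h) c := by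
  intro K _ ε hε
  obtain ⟨δ, hδ, hφδ⟩ := Metric.tendsto_nhdsWithin_nhds.mp hφ ε hε
  refine ⟨δ, hδ, fun h h0 hhδ _ _ => ?_⟩
  have := hφδ (mem_Ioi.mpr h0) (by rwa [Real.dist_eq, sub_zero, abs_of_pos h0])
  rwa [Real.dist_eq, sub_neg_eq_add] at this

theorem unifDiagLimits_comp_sub {G : ℝ → ℝ} {ρ : ℝ}
    (h₁ : Tendsto (fun x => x * deriv G x / G x) (𝓝[>] 0) (𝓝 ρ))
    (h₂ : Tendsto (fun x => x ^ 2 * deriv (deriv G) x / G x) (𝓝[>] 0) (𝓝 (ρ * (ρ - 1)))) :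
    let F := fun t r => G (t - r)
    UnifDiagLimit (fun h t => h * p01 F t (t - h) / F t (t - h)) ρ ∧
    UnifDiagLimit (fun h t => h * p10 F (t + h) t / F (t + h) t) (-ρ) ∧
    UnifDiagLimit (fun h t => h ^ 2 * p11 F t (t - h) / F t (t - h)) (ρ * (ρ - 1)) ∧
    UnifDiagLimit (fun h t => h ^ 2 * p02 F t (t - h) / F t (t - h)) (-(ρ * (ρ - 1))) := by
  simp only [p01_comp_sub, p10_comp_sub, p11_comp_sub, p02_comp_sub, sub_sub_cancel,
    add_sub_cancel_left, mul_neg, neg_div]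
  exact ⟨unifDiagLimit_of_tendsto h₁.neg, unifDiagLimit_of_tendsto (by simpa using h₁),
    unifDiagLimit_of_tendsto h₂.neg, unifDiagLimit_of_tendsto (by simpa using h₂)⟩

noncomputable def powerLog (ρ η x : ℝ) : ℝ := x ^ ρ * |log x| ^ η

section PowerLog

variable {ρ η x : ℝ}

lemma powerLog_pos (hx : x ∈ Ioo (0 : ℝ) 1) : 0 < powerLog ρ η x :=
  mul_pos (rpow_pos_of_pos hx.1 ρ) (rpow_pos_of_pos (abs_pos.mpr (log_neg hx.1 hx.2).ne) η)

lemma hasDerivAt_powerLog (hx : x ∈ Ioo (0 : ℝ) 1) :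
    HasDerivAt (powerLog ρ η) (powerLog ρ η x * (ρ + η / log x) / x) x := by
  have hlog : log x < 0 := log_neg hx.1 hx.2
  have hx0 : x ≠ 0 := hx.1.ne'
  have hnegLog : HasDerivAt (fun y => -log y) (-x⁻¹) x := (hasDerivAt_log hx0).neg
  have hprod := (hasDerivAt_rpow_const (p := ρ) (Or.inl hx0)).mul
    (hnegLog.rpow_const (p := η) (Or.inl (neg_ne_zero.mpr hlog.ne)))
  have hloc : (fun y => y ^ ρ * (-log y) ^ η) =ᶠ[𝓝 x] powerLog ρ η := by
    filter_upwards [isOpen_Ioo.mem_nhds hx] with y hy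
    rw [powerLog, abs_of_neg (log_neg hy.1 hy.2)]
  refine (hprod.congr_of_eventuallyEq hloc.symm).congr_deriv ?_
  rw [powerLog, abs_of_neg hlog, rpow_sub_one hx0, rpow_sub_one (neg_ne_zero.mpr hlog.ne)]
  field_simp

lemma eqOn_deriv_powerLog :
    EqOn (deriv (powerLog ρ η)) (fun x => powerLog ρ η x * (ρ + η / log x) / x) (Ioo 0 1) :=
  fun _ hx => (hasDerivAt_powerLog hx).deriv

lemma hasDerivAt_deriv_powerLog (hx : x ∈ Ioo (0 : ℝ) 1) :
    HasDerivAt (deriv (powerLog ρ η))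
      (powerLog ρ η x * ((ρ + η / log x) ^ 2 - (ρ + η / log x) - η / log x ^ 2) / x ^ 2) x := by
  have hlog : log x ≠ 0 := (log_neg hx.1 hx.2).ne
  have hx0 : x ≠ 0 := hx.1.ne'
  have hφ : HasDerivAt (fun y => ρ + η / log y) (-(η * x⁻¹) / log x ^ 2) x :=
    ((hasDerivAt_log hx0).fun_inv hlog |>.const_mul η |>.const_add ρ).congr_deriv (by ring)
  have hquot := ((hasDerivAt_powerLog (ρ := ρ) (η := η) hx).mul hφ).div (hasDerivAt_id x) hx0
  refine (hquot.congr_of_eventuallyEq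
    (eqOn_deriv_powerLog.eventuallyEq_of_mem (isOpen_Ioo.mem_nhds hx))).congr_deriv ?_
  simp only [id, Pi.mul_apply]
  field_simp
  ring

lemma tendsto_inv_log_nhdsGT_zero : Tendsto (fun x => (log x)⁻¹) (𝓝[>] 0) (𝓝 0) :=
  tendsto_log_nhdsGT_zero.inv_tendsto_atBot

lemma tendsto_add_mul_inv_log_nhdsGT_zero (ρ η : ℝ) :
    Tendsto (fun x => ρ + η * (log x)⁻¹) (𝓝[>] 0) (𝓝 ρ) := by
  simpa using (tendsto_inv_log_nhdsGT_zero.const_mul η).const_add ρ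

lemma eventually_mem_Ioo_nhdsGT_zero : ∀ᶠ x in 𝓝[>] (0 : ℝ), x ∈ Ioo (0 : ℝ) 1 :=
  Ioo_mem_nhdsGT one_pos

lemma tendsto_mul_deriv_div_powerLog :
    Tendsto (fun x => x * deriv (powerLog ρ η) x / powerLog ρ η x) (𝓝[>] 0) (𝓝 ρ) := by
  refine (tendsto_add_mul_inv_log_nhdsGT_zero ρ η).congr' ?_
  filter_upwards [eventually_mem_Ioo_nhdsGT_zero] with x hx
  rw [eqOn_deriv_powerLog hx]
  field_simp [(powerLog_pos hx).ne', hx.1.ne']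

lemma tendsto_sq_mul_deriv_deriv_div_powerLog :
    Tendsto (fun x => x ^ 2 * deriv (deriv (powerLog ρ η)) x / powerLog ρ η x) (𝓝[>] 0)
      (𝓝 (ρ * (ρ - 1))) := by
  have hφ := tendsto_add_mul_inv_log_nhdsGT_zero ρ η
  have hlim := ((hφ.pow 2).sub hφ).sub ((tendsto_inv_log_nhdsGT_zero.pow 2).const_mul η)
  rw [show ρ ^ 2 - ρ - η * 0 ^ 2 = ρ * (ρ - 1) by ring] at hlim
  refine hlim.congr' ?_
  filter_upwards [eventually_mem_Ioo_nhdsGT_zero] with x hx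
  rw [(hasDerivAt_deriv_powerLog hx).deriv]
  field_simp [(powerLog_pos hx).ne', hx.1.ne']

end PowerLog

theorem power_log_kernel_smoothVar_general (ρ η : ℝ)
    (F : ℝ → ℝ → ℝ) (hF : ∀ t r : ℝ, F t r = (t - r) ^ ρ * |Real.log (t - r)| ^ η) :
    UnifDiagLimit (fun h t => h * p01 F t (t - h) / F t (t - h)) ρ ∧
    UnifDiagLimit (fun h t => h * p10 F (t + h) t / F (t + h) t) (-ρ) ∧
    UnifDiagLimit (fun h t => h ^ 2 * p11 F t (t - h) / F t (t - h)) (ρ * (ρ - 1)) ∧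
    UnifDiagLimit (fun h t => h ^ 2 * p02 F t (t - h) / F t (t - h)) (-(ρ * (ρ - 1))) := by
  obtain rfl : F = fun t r => powerLog ρ η (t - r) := funext₂ hF
  exact unifDiagLimits_comp_sub tendsto_mul_deriv_div_powerLog
    tendsto_sq_mul_deriv_deriv_div_powerLog

/-- `F(t,r) = (t-r)^ρ |log(t-r)|^η` satisfies conditions (a)–(d) of
the definition of `SR²_ρ(0+)` uniformly on compacts (near the diagonal, where
`t - r ∈ (0,1)`). -/
theorem power_log_kernel_smoothVar (ρ η : ℝ) (hρ : 0 < ρ)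
    (F : ℝ → ℝ → ℝ) (hF : ∀ t r : ℝ, F t r = (t - r) ^ ρ * |Real.log (t - r)| ^ η) :
    UnifDiagLimit (fun h t => h * p01 F t (t - h) / F t (t - h)) ρ ∧
    UnifDiagLimit (fun h t => h * p10 F (t + h) t / F (t + h) t) (-ρ) ∧
    UnifDiagLimit (fun h t => h ^ 2 * p11 F t (t - h) / F t (t - h)) (ρ * (ρ - 1)) ∧
    UnifDiagLimit (fun h t => h ^ 2 * p02 F t (t - h) / F t (t - h)) (-(ρ * (ρ - 1))) :=
  power_log_kernel_smoothVar_general ρ η F hF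
end

section
/- Let f ∈ SD²_{d−1}(0+) with d ∈ (0,1), i.e., f = F^{(0,1)} for some F ∈ SR²_d(0+). Define g_δ(t,v) = [f(t+δ, t−δv) − f(t, t−δv)] / f(t+δ, t). Then for every h₀ ∈ (0,1]: lim_{δ↓0} sup_{t ∈ [0,1]} | ∫₀^{h₀/δ} g_δ(t,v) dv + 1/d | = 0. -/
open MeasureTheory ProbabilityTheory Filter Set intervalIntegral Real

open Topology

/-!
Substituting `r = t - δ v` and applying the fundamental theorem of calculus in `r` turns the
integral into `(F(t+δ,t) - F(t,t) - (F(t+δ,t-h₀) - F(t,t-h₀))) / (δ f(t+δ,t))`. The index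
condition `h f(s,s-h) / F(s,s-h) → -d` makes `f(s,·)` negative just below the diagonal, so
`f(t,·)` is integrable up to its singularity at `r = t`. Integrating the index condition gives
Potter's bounds `F(s,s-h) ≍ h^(d ± ε)`, hence `F(t,t) = 0`. The same condition gives
`F(t+δ,t) / (δ f(t+δ,t)) → -1/d` uniformly in `t`, while the remaining term is
`O(δ) / F(t+δ,t) = O(δ^(1-d-ε))` by the mean value theorem in the first variable and Potter's
lower bound; it vanishes because `d < 1`.
-/

section PartialDerivatives

variable {F : ℝ → ℝ → ℝ} {t r : ℝ}

lemma hasDerivAt_fderiv_apply_snd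
    (hF : DifferentiableAt ℝ (fun p : ℝ × ℝ => F p.1 p.2) (t, r)) :
    HasDerivAt (F t) (fderiv ℝ (fun p : ℝ × ℝ => F p.1 p.2) (t, r) (0, 1)) r :=
  hF.hasFDerivAt.comp_hasDerivAt r ((hasDerivAt_const r t).prodMk (hasDerivAt_id r))

lemma hasDerivAt_fderiv_apply_fst
    (hF : DifferentiableAt ℝ (fun p : ℝ × ℝ => F p.1 p.2) (t, r)) :
    HasDerivAt (fun x => F x r) (fderiv ℝ (fun p : ℝ × ℝ => F p.1 p.2) (t, r) (1, 0)) t := by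
  have h := hF.hasFDerivAt.comp_hasDerivAt t ((hasDerivAt_id' t).prodMk (hasDerivAt_const t r))
  exact h

lemma differentiableAt_of_contDiffOn_below_diag
    (hC : ContDiffOn ℝ 1 (fun p : ℝ × ℝ => F p.1 p.2) {p | p.2 < p.1}) (h : r < t) :
    DifferentiableAt ℝ (fun p : ℝ × ℝ => F p.1 p.2) (t, r) :=
  (hC.differentiableOn one_ne_zero).differentiableAt
    ((isOpen_lt continuous_snd continuous_fst).mem_nhds h)

lemma hasDerivAt_p01 (hC : ContDiffOn ℝ 1 (fun p : ℝ × ℝ => F p.1 p.2) {p | p.2 < p.1})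
    (h : r < t) : HasDerivAt (F t) (p01 F t r) r := by
  have hF := hasDerivAt_fderiv_apply_snd (differentiableAt_of_contDiffOn_below_diag hC h)
  rwa [p01, hF.deriv]

lemma hasDerivAt_p10 (hC : ContDiffOn ℝ 1 (fun p : ℝ × ℝ => F p.1 p.2) {p | p.2 < p.1})
    (h : r < t) : HasDerivAt (fun x => F x r) (p10 F t r) t := by
  have hF := hasDerivAt_fderiv_apply_fst (differentiableAt_of_contDiffOn_below_diag hC h)
  rwa [p10, hF.deriv]

lemma continuousOn_p01 (hC : ContDiffOn ℝ 1 (fun p : ℝ × ℝ => F p.1 p.2) {p | p.2 < p.1}) :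
    ContinuousOn (fun p : ℝ × ℝ => p01 F p.1 p.2) {p | p.2 < p.1} := by
  refine ((hC.continuousOn_fderiv_of_isOpen (isOpen_lt continuous_snd continuous_fst)
    le_rfl).clm_apply (continuousOn_const (c := ((0 : ℝ), (1 : ℝ))))).congr fun p hp => ?_
  exact (hasDerivAt_fderiv_apply_snd (differentiableAt_of_contDiffOn_below_diag hC hp)).deriv

lemma continuousOn_p10 (hC : ContDiffOn ℝ 1 (fun p : ℝ × ℝ => F p.1 p.2) {p | p.2 < p.1}) :
    ContinuousOn (fun p : ℝ × ℝ => p10 F p.1 p.2) {p | p.2 < p.1} := by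
  refine ((hC.continuousOn_fderiv_of_isOpen (isOpen_lt continuous_snd continuous_fst)
    le_rfl).clm_apply (continuousOn_const (c := ((1 : ℝ), (0 : ℝ))))).congr fun p hp => ?_
  exact (hasDerivAt_fderiv_apply_fst (differentiableAt_of_contDiffOn_below_diag hC hp)).deriv

end PartialDerivatives

lemma monotoneOn_mul_rpow_of_nonneg {φ φ' : ℝ → ℝ} {c : ℝ} {s : Set ℝ} (hs : Convex ℝ s)
    (hs0 : s ⊆ Ioi 0) (hφ : ∀ x ∈ s, HasDerivAt φ (φ' x) x)
    (h : ∀ x ∈ s, 0 ≤ x * φ' x + c * φ x) : MonotoneOn (fun x => φ x * x ^ c) s := by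
  have hderiv : ∀ x ∈ s,
      HasDerivAt (fun x => φ x * x ^ c) (x ^ (c - 1) * (x * φ' x + c * φ x)) x := by
    intro x hx
    have hx0 : 0 < x := hs0 hx
    refine ((hφ x hx).mul (Real.hasDerivAt_rpow_const (Or.inl hx0.ne'))).congr_deriv ?_
    rw [Real.rpow_sub_one hx0.ne']
    field_simp
  refine monotoneOn_of_deriv_nonneg hs (fun x hx => (hderiv x hx).continuousAt.continuousWithinAt)
    (fun x hx => (hderiv x (interior_subset hx)).differentiableAt.differentiableWithinAt)
    fun x hx => ?_
  rw [(hderiv x (interior_subset hx)).deriv]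
  exact mul_nonneg (Real.rpow_nonneg (hs0 (interior_subset hx)).le _) (h x (interior_subset hx))

lemma mul_rpow_neg_le_mul_rpow_neg_iff {u v x b p : ℝ} (hx : 0 < x) (hb : 0 < b) :
    u * b ^ (-p) ≤ v * x ^ (-p) ↔ u * (x / b) ^ p ≤ v := by
  rw [Real.rpow_neg hx.le, Real.rpow_neg hb.le, ← div_eq_mul_inv, ← div_eq_mul_inv,
    div_le_div_iff₀ (by positivity) (by positivity), Real.div_rpow hx.le hb.le, mul_div_assoc',
    div_le_iff₀ (by positivity)]

theorem potter_bounds {φ φ' : ℝ → ℝ} {ρ ε b x : ℝ} (hφ : ∀ y ∈ Ioc 0 b, 0 < φ y)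
    (hderiv : ∀ y ∈ Ioc 0 b, HasDerivAt φ (φ' y) y)
    (hidx : ∀ y ∈ Ioc 0 b, |y * φ' y / φ y - ρ| ≤ ε) (hx : x ∈ Ioc 0 b) :
    φ b * (x / b) ^ (ρ + ε) ≤ φ x ∧ φ x ≤ φ b * (x / b) ^ (ρ - ε) := by
  have hb : b ∈ Ioc 0 b := ⟨hx.1.trans_le hx.2, le_rfl⟩
  have hidx' : ∀ y ∈ Ioc 0 b, (ρ - ε) * φ y ≤ y * φ' y ∧ y * φ' y ≤ (ρ + ε) * φ y := by
    intro y hy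
    have h := abs_le.1 (hidx y hy)
    have hφy := hφ y hy
    exact ⟨(le_div_iff₀ hφy).1 (by linarith), (div_le_iff₀ hφy).1 (by linarith)⟩
  have hconv : Convex ℝ (Ioc 0 b) := convex_Ioc 0 b
  have hupper := monotoneOn_mul_rpow_of_nonneg hconv (fun y hy => hy.1) hderiv
    (c := -(ρ - ε)) fun y hy => by linarith [(hidx' y hy).1]
  have hlower := monotoneOn_mul_rpow_of_nonneg hconv (fun y hy => hy.1) (φ := fun y => -φ y)
    (fun y hy => (hderiv y hy).neg) (c := -(ρ + ε)) fun y hy => by linarith [(hidx' y hy).2]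
  constructor
  · refine (mul_rpow_neg_le_mul_rpow_neg_iff hx.1 hb.1).1 ?_
    linarith [hlower hx hb hx.2]
  · have h := (mul_rpow_neg_le_mul_rpow_neg_iff hx.1 hb.1 (u := -φ b) (v := -φ x)).1
      (by linarith [hupper hx hb hx.2])
    linarith

lemma intervalIntegrable_deriv_of_nonpos_near_right {g g' : ℝ → ℝ} {a b c : ℝ} (hac : a ≤ c)
    (hcb : c ≤ b) (hg : ContinuousOn g (Icc c b)) (hderiv : ∀ x ∈ Ioo c b, HasDerivAt g (g' x) x)
    (hg' : ContinuousOn g' (Icc a c)) (hnonpos : ∀ x ∈ Ioo c b, g' x ≤ 0) :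
    IntervalIntegrable g' volume a b := by
  have hright : IntervalIntegrable (-g') volume c b := by
    refine intervalIntegrable_deriv_of_nonneg (g := -g) ?_ ?_ ?_ <;>
      simp only [uIcc_of_le hcb, min_eq_left hcb, max_eq_right hcb]
    · exact hg.neg
    · exact fun x hx => (hderiv x hx).neg
    · exact fun x hx => neg_nonneg.2 (hnonpos x hx)
  exact (hg'.intervalIntegrable_of_Icc hac).trans (neg_neg g' ▸ hright.neg)

section Slices

variable {F : ℝ → ℝ → ℝ} {s a b c : ℝ}

lemma continuousOn_Iic_of_continuousOn_le
    (hcont : ContinuousOn (fun p : ℝ × ℝ => F p.1 p.2) {p | p.2 ≤ p.1}) :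
    ContinuousOn (F s) (Iic s) :=
  hcont.comp (continuous_const.prodMk continuous_id).continuousOn fun _ hr => hr

lemma continuousOn_p01_Iio (hC : ContDiffOn ℝ 1 (fun p : ℝ × ℝ => F p.1 p.2) {p | p.2 < p.1}) :
    ContinuousOn (p01 F s) (Iio s) :=
  (continuousOn_p01 hC).comp (continuous_const.prodMk continuous_id).continuousOn fun _ hr => hr

lemma integral_p01_eq_sub_of_nonpos_near
    (hcont : ContinuousOn (fun p : ℝ × ℝ => F p.1 p.2) {p | p.2 ≤ p.1})
    (hC : ContDiffOn ℝ 1 (fun p : ℝ × ℝ => F p.1 p.2) {p | p.2 < p.1})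
    (hac : a ≤ c) (hcb : c ≤ b) (hbs : b ≤ s) (hcs : c < s)
    (hsign : ∀ r ∈ Ioo c b, p01 F s r ≤ 0) :
    IntervalIntegrable (p01 F s) volume a b ∧ ∫ r in a..b, p01 F s r = F s b - F s a := by
  have hFs : ContinuousOn (F s) (Icc a b) :=
    (continuousOn_Iic_of_continuousOn_le hcont).mono fun r hr => hr.2.trans hbs
  have hderiv : ∀ r ∈ Ioo a b, HasDerivAt (F s) (p01 F s r) r :=
    fun r hr => hasDerivAt_p01 hC (hr.2.trans_le hbs)
  have hint : IntervalIntegrable (p01 F s) volume a b :=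
    intervalIntegrable_deriv_of_nonpos_near_right hac hcb
      (hFs.mono (Icc_subset_Icc_left hac)) (fun r hr => hderiv r ⟨hac.trans_lt hr.1, hr.2⟩)
      ((continuousOn_p01_Iio hC).mono fun r hr => hr.2.trans_lt hcs) hsign
  exact ⟨hint, integral_eq_sub_of_hasDerivAt_of_le (hac.trans hcb) hFs hderiv hint⟩

end Slices

lemma UnifDiagLimit.exists_forall_Ioc {G : ℝ → ℝ → ℝ} {c : ℝ} (hG : UnifDiagLimit G c)
    {K : Set ℝ} (hK : IsCompact K) {ε : ℝ} (hε : 0 < ε) :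
    ∃ b > 0, ∀ t ∈ K, ∀ h ∈ Ioc 0 b, |G h t + c| ≤ ε := by
  obtain ⟨h₀, hh₀, hG⟩ := hG K hK ε hε
  exact ⟨h₀ / 2, by positivity, fun t ht h hh => (hG h hh.1 (by linarith [hh.2]) t ht).le⟩

section IndexBounds

variable {F : ℝ → ℝ → ℝ} {s ρ ε b h : ℝ}

lemma potter_bounds_diag (hC : ContDiffOn ℝ 1 (fun p : ℝ × ℝ => F p.1 p.2) {p | p.2 < p.1})
    (hpos : ∀ t r : ℝ, r < t → 0 < F t r)
    (hidx : ∀ h ∈ Ioc 0 b, |h * p01 F s (s - h) / F s (s - h) + ρ| ≤ ε) (hh : h ∈ Ioc 0 b) :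
    F s (s - b) * (h / b) ^ (ρ + ε) ≤ F s (s - h) ∧
      F s (s - h) ≤ F s (s - b) * (h / b) ^ (ρ - ε) := by
  refine potter_bounds (φ := fun h => F s (s - h)) (φ' := fun h => -p01 F s (s - h))
    (fun y hy => hpos s _ (by linarith [hy.1])) (fun y hy => ?_) (fun y hy => ?_) hh
  · have hd := (hasDerivAt_p01 hC (by linarith [hy.1] : s - y < s)).comp y
      ((hasDerivAt_id' y).const_sub s)
    rw [mul_neg, mul_one] at hd
    exact hd
  · rw [← abs_neg]
    convert hidx y hy using 2
    ring

lemma p01_neg_of_index (hpos : ∀ t r : ℝ, r < t → 0 < F t r)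
    (hidx : ∀ h ∈ Ioc 0 b, |h * p01 F s (s - h) / F s (s - h) + ρ| ≤ ε) (hερ : ε < ρ)
    (hh : h ∈ Ioc 0 b) : p01 F s (s - h) < 0 := by
  by_contra hnonneg
  have hq : 0 ≤ h * p01 F s (s - h) / F s (s - h) :=
    div_nonneg (mul_nonneg hh.1.le (not_lt.1 hnonneg)) (hpos s _ (by linarith [hh.1])).le
  linarith [(abs_le.1 (hidx h hh)).2]

theorem diag_eq_zero_of_unifDiagLimit
    (hcont : ContinuousOn (fun p : ℝ × ℝ => F p.1 p.2) {p | p.2 ≤ p.1})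
    (hC : ContDiffOn ℝ 1 (fun p : ℝ × ℝ => F p.1 p.2) {p | p.2 < p.1})
    (hpos : ∀ t r : ℝ, r < t → 0 < F t r)
    (hlim : UnifDiagLimit (fun h t => h * p01 F t (t - h) / F t (t - h)) ρ) (hρ : 0 < ρ)
    (t : ℝ) : F t t = 0 := by
  obtain ⟨b, hb, hidx⟩ := hlim.exists_forall_Ioc isCompact_singleton (half_pos hρ) (K := {t})
  have hidx := hidx t rfl
  have hto : Tendsto (fun h => F t (t - h)) (𝓝[>] 0) (𝓝 (F t t)) := by
    refine ((continuousOn_Iic_of_continuousOn_le hcont) t self_mem_Iic).tendsto.comp ?_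
    refine tendsto_nhdsWithin_iff.2 ⟨?_, eventually_nhdsWithin_of_forall fun h hh => ?_⟩
    · exact ((continuous_sub_left t).tendsto' 0 t (sub_zero t)).mono_left nhdsWithin_le_nhds
    · exact (sub_lt_self t hh).le
  have hbound : Tendsto (fun h => F t (t - b) * (h / b) ^ (ρ - ρ / 2)) (𝓝[>] 0) (𝓝 0) := by
    have : ContinuousAt (fun h => F t (t - b) * (h / b) ^ (ρ - ρ / 2)) 0 := by
      fun_prop (disch := right; linarith)
    simpa [Real.zero_rpow (by linarith : ρ - ρ / 2 ≠ 0)] using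
      this.tendsto.mono_left nhdsWithin_le_nhds
  refine tendsto_nhds_unique hto (squeeze_zero' ?_ ?_ hbound)
  · exact eventually_nhdsWithin_of_forall fun h hh => (hpos t _ (sub_lt_self t hh)).le
  · filter_upwards [Ioc_mem_nhdsGT hb] with h hh
    exact (potter_bounds_diag hC hpos hidx hh).2

end IndexBounds

section Integral

variable {F : ℝ → ℝ → ℝ}

lemma integral_sub_p01_div_eq
    (hcont : ContinuousOn (fun p : ℝ × ℝ => F p.1 p.2) {p | p.2 ≤ p.1})
    (hC : ContDiffOn ℝ 1 (fun p : ℝ × ℝ => F p.1 p.2) {p | p.2 < p.1})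
    {t δ h₀ c : ℝ} (hdiag : F t t = 0) (hδ : 0 < δ) (hc : t - h₀ ≤ c) (hct : c < t)
    (hsign : ∀ r ∈ Ioo c t, p01 F t r ≤ 0 ∧ p01 F (t + δ) r ≤ 0) :
    ∫ v in (0:ℝ)..h₀ / δ, (p01 F (t + δ) (t - δ * v) - p01 F t (t - δ * v)) / p01 F (t + δ) t
      = (F (t + δ) t - (F (t + δ) (t - h₀) - F t (t - h₀))) / (δ * p01 F (t + δ) t) := by
  obtain ⟨hint₁, hFTC₁⟩ := integral_p01_eq_sub_of_nonpos_near hcont hC hc hct.le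
    (by linarith) (by linarith) fun r hr => (hsign r hr).2
  obtain ⟨hint₀, hFTC₀⟩ := integral_p01_eq_sub_of_nonpos_near hcont hC hc hct.le
    le_rfl hct fun r hr => (hsign r hr).1
  have hsubst := intervalIntegral.integral_comp_sub_mul
    (fun r => p01 F (t + δ) r - p01 F t r) hδ.ne' t (a := 0) (b := h₀ / δ)
  rw [mul_div_cancel₀ h₀ hδ.ne', mul_zero, sub_zero,
    intervalIntegral.integral_sub hint₁ hint₀, hFTC₁, hFTC₀, hdiag] at hsubst
  rw [intervalIntegral.integral_div, hsubst, smul_eq_mul, div_mul_eq_div_div]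
  ring

end Integral

lemma abs_sub_div_add_inv_le {Y E D δ d ε : ℝ} (hY : 0 < Y) (hδ : 0 < δ)
    (hQ : |δ * D / Y + d| ≤ ε) (hεd : ε < d) :
    |(Y - E) / (δ * D) + 1 / d| ≤ ε / ((d - ε) * d) + |E| / ((d - ε) * Y) := by
  set Q := δ * D / Y with hQdef
  have hQ_le : d - ε ≤ |Q| := by
    have := abs_le.1 hQ
    rw [abs_of_neg (by linarith)]
    linarith
  have hQ0 : Q ≠ 0 := abs_pos.1 (by linarith)
  have hd : 0 < d := by linarith [abs_nonneg (Q + d)]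
  have hδD : δ * D = Q * Y := by rw [hQdef]; field_simp
  have hsplit : (Y - E) / (δ * D) + 1 / d = (Q + d) / (Q * d) - E / (Q * Y) := by
    rw [hδD]; field_simp; ring
  rw [hsplit]
  refine (abs_sub _ _).trans (add_le_add ?_ ?_)
  · rw [abs_div, abs_mul, abs_of_pos hd]
    exact div_le_div₀ ((abs_nonneg _).trans hQ) hQ (by nlinarith) (by nlinarith)
  · rw [abs_div, abs_mul, abs_of_pos hY]
    exact div_le_div_of_nonneg_left (abs_nonneg E) (by nlinarith) (by nlinarith)

section UniformBound

variable {F : ℝ → ℝ → ℝ}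

lemma abs_sub_le_of_abs_p10_le
    (hC : ContDiffOn ℝ 1 (fun p : ℝ × ℝ => F p.1 p.2) {p | p.2 < p.1})
    {t δ r M : ℝ} (hδ : 0 ≤ δ) (hr : r < t) (hM : ∀ x ∈ Icc t (t + δ), |p10 F x r| ≤ M) :
    |F (t + δ) r - F t r| ≤ M * δ := by
  have h := (convex_Icc t (t + δ)).norm_image_sub_le_of_norm_hasDerivWithin_le
    (f := fun x => F x r) (fun x hx => (hasDerivAt_p10 hC (hr.trans_le hx.1)).hasDerivWithinAt)
    hM (left_mem_Icc.2 (by linarith)) (right_mem_Icc.2 (by linarith))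
  rwa [add_sub_cancel_left, Real.norm_of_nonneg hδ] at h

lemma exists_pos_le_apply_sub
    (hcont : ContinuousOn (fun p : ℝ × ℝ => F p.1 p.2) {p | p.2 ≤ p.1})
    (hpos : ∀ t r : ℝ, r < t → 0 < F t r) {K : Set ℝ} (hK : IsCompact K) {h : ℝ} (hh : 0 < h) :
    ∃ c > 0, ∀ s ∈ K, c ≤ F s (s - h) := by
  rcases K.eq_empty_or_nonempty with rfl | hne
  · exact ⟨1, one_pos, by simp⟩
  obtain ⟨s₁, -, hmin⟩ := hK.exists_isMinOn hne
    (hcont.comp (continuous_id.prodMk (continuous_sub_right h)).continuousOn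
      fun s _ => show s - h ≤ s by linarith : ContinuousOn (fun s => F s (s - h)) K)
  exact ⟨F s₁ (s₁ - h), hpos _ _ (by linarith), fun s hs => hmin hs⟩

lemma exists_abs_p10_le (hC : ContDiffOn ℝ 1 (fun p : ℝ × ℝ => F p.1 p.2) {p | p.2 < p.1})
    {a h : ℝ} (hh : 0 < h) : ∃ M, ∀ t ∈ Icc 0 a, ∀ x ∈ Icc t a, |p10 F x (t - h)| ≤ M := by
  obtain ⟨M, hM⟩ := ((isCompact_Icc (a := (0 : ℝ)) (b := a)).prod isCompact_Icc).inter_right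
      (isClosed_le continuous_snd continuous_fst) |>.exists_bound_of_continuousOn
    (f := fun q => p10 F q.1 (q.2 - h)) ((continuousOn_p10 hC).comp
      (continuous_fst.prodMk (continuous_snd.sub continuous_const)).continuousOn
      fun q hq => show q.2 - h < q.1 from (sub_lt_self _ hh).trans_le hq.2)
  exact ⟨M, fun t ht x hx => hM (x, t) ⟨⟨⟨ht.1.trans hx.1, hx.2⟩, ht⟩, hx.1⟩⟩

theorem exists_uniform_bound_integral
    (hcont : ContinuousOn (fun p : ℝ × ℝ => F p.1 p.2) {p | p.2 ≤ p.1})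
    (hC : ContDiffOn ℝ 1 (fun p : ℝ × ℝ => F p.1 p.2) {p | p.2 < p.1})
    (hpos : ∀ t r : ℝ, r < t → 0 < F t r) {d ε h₀ : ℝ}
    (hlim : UnifDiagLimit (fun h t => h * p01 F t (t - h) / F t (t - h)) d)
    (hε : 0 < ε) (hεd : ε < d) (hh₀ : 0 < h₀) :
    ∃ δ₁ > 0, ∃ C, ∀ δ ∈ Ioo 0 δ₁, ∀ t ∈ Icc (0 : ℝ) 1,
      |(∫ v in (0:ℝ)..h₀ / δ,
          (p01 F (t + δ) (t - δ * v) - p01 F t (t - δ * v)) / p01 F (t + δ) t) + 1 / d|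
        ≤ ε / ((d - ε) * d) + C * δ ^ (1 - (d + ε)) := by
  have hdε : 0 < d - ε := by linarith
  obtain ⟨b, hb, hidx⟩ := hlim.exists_forall_Ioc (isCompact_Icc (a := 0) (b := 2)) hε
  set h₂ := min (b / 2) (min h₀ 1)
  have hh₂ : 0 < h₂ := lt_min (half_pos hb) (lt_min hh₀ one_pos)
  have hh₂b : h₂ ≤ b / 2 := min_le_left _ _
  have hh₂h₀ : h₂ ≤ h₀ := (min_le_right _ _).trans (min_le_left _ _)
  have hh₂1 : h₂ ≤ 1 := (min_le_right _ _).trans (min_le_right _ _)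
  have hidx₂ : ∀ s ∈ Icc (0 : ℝ) 2, ∀ h ∈ Ioc 0 h₂,
      |h * p01 F s (s - h) / F s (s - h) + d| ≤ ε :=
    fun s hs h hh => hidx s hs h ⟨hh.1, by linarith [hh.2]⟩
  obtain ⟨c, hc, hcle⟩ := exists_pos_le_apply_sub hcont hpos isCompact_Icc hh₂ (K := Icc 0 2)
  obtain ⟨M, hM⟩ := exists_abs_p10_le hC hh₀ (F := F) (a := 2)
  refine ⟨h₂, hh₂, M * h₂ ^ (d + ε) / ((d - ε) * c), fun δ hδ t ht => ?_⟩
  obtain ⟨hδ0, hδh₂⟩ := hδ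
  have hs : t + δ ∈ Icc (0 : ℝ) 2 := ⟨by linarith [ht.1], by linarith [ht.2]⟩
  have hsign : ∀ r ∈ Ioo (t - h₂) t, p01 F t r ≤ 0 ∧ p01 F (t + δ) r ≤ 0 := by
    intro r hr
    constructor
    · simpa using (p01_neg_of_index hpos (hidx t ⟨ht.1, by linarith [ht.2]⟩) hεd
        (h := t - r) ⟨by linarith [hr.2], by linarith [hr.1]⟩).le
    · simpa using (p01_neg_of_index hpos (hidx (t + δ) hs) hεd
        (h := t + δ - r) ⟨by linarith [hr.2], by linarith [hr.1]⟩).le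
  have hQ := hidx₂ (t + δ) hs δ ⟨hδ0, hδh₂.le⟩
  rw [add_sub_cancel_right] at hQ
  have hYlow : c * (δ / h₂) ^ (d + ε) ≤ F (t + δ) t := by
    have h := (potter_bounds_diag hC hpos (hidx₂ (t + δ) hs) ⟨hδ0, hδh₂.le⟩).1
    rw [add_sub_cancel_right] at h
    exact (mul_le_mul_of_nonneg_right (hcle _ hs) (by positivity)).trans h
  have hE : |F (t + δ) (t - h₀) - F t (t - h₀)| ≤ M * δ :=
    abs_sub_le_of_abs_p10_le hC hδ0.le (by linarith) fun x hx =>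
      hM t ⟨ht.1, by linarith [ht.2]⟩ x ⟨hx.1, by linarith [ht.2, hx.2]⟩
  rw [integral_sub_p01_div_eq hcont hC (diag_eq_zero_of_unifDiagLimit hcont hC hpos hlim
    (hε.trans hεd) t) hδ0 (by linarith) (by linarith) hsign]
  refine (abs_sub_div_add_inv_le (hpos _ _ (by linarith)) hδ0 hQ hεd).trans
    (add_le_add le_rfl ?_)
  calc |F (t + δ) (t - h₀) - F t (t - h₀)| / ((d - ε) * F (t + δ) t)
      ≤ M * δ / ((d - ε) * (c * (δ / h₂) ^ (d + ε))) :=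
        div_le_div₀ ((abs_nonneg _).trans hE) hE (mul_pos hdε (mul_pos hc (by positivity)))
          (mul_le_mul_of_nonneg_left hYlow hdε.le)
    _ = M * h₂ ^ (d + ε) / ((d - ε) * c) * δ ^ (1 - (d + ε)) := by
        rw [Real.div_rpow hδ0.le hh₂.le, Real.rpow_sub hδ0, Real.rpow_one]
        field_simp

end UniformBound

/-- Lemma 5(b): for `f ∈ SD²_{d−1}(0+)` and
`g_δ(t,v) = [f(t+δ,t−δv) − f(t,t−δv)]/f(t+δ,t)`, for every `h₀ ∈ (0,1]`,
`lim_{δ↓0} sup_{t∈[0,1]} |∫₀^{h₀/δ} g_δ(t,v) dv + 1/d| = 0`. -/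
theorem lemma5b (d : ℝ) (hd : d ∈ Set.Ioo (0:ℝ) 1)
    (F : ℝ → ℝ → ℝ) (hF : SmoothVar F d)
    (f : ℝ → ℝ → ℝ) (hf : ∀ t r : ℝ, f t r = p01 F t r) :
    ∀ h₀ ∈ Set.Ioc (0:ℝ) 1, ∀ ε > (0:ℝ), ∃ δ₀ > (0:ℝ), ∀ δ : ℝ, 0 < δ → δ < δ₀ →
      ∀ t ∈ Set.Icc (0:ℝ) 1,
        |(∫ v in (0:ℝ)..(h₀ / δ),
            (f (t + δ) (t - δ * v) - f t (t - δ * v)) / f (t + δ) t) + 1 / d| < ε := by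
  obtain ⟨hcont, hC, hpos, hlim, -⟩ := hF
  obtain ⟨hd0, hd1⟩ := hd
  intro h₀ hh₀ ε hε
  set ε₁ := min (d / 2) (min ((1 - d) / 2) (ε * d ^ 2 / 8))
  have hε₁ : 0 < ε₁ := lt_min (by linarith) (lt_min (by linarith) (by positivity))
  have hε₁d : ε₁ ≤ d / 2 := min_le_left _ _
  have hε₁1 : ε₁ ≤ (1 - d) / 2 := (min_le_right _ _).trans (min_le_left _ _)
  have hε₁ε : ε₁ ≤ ε * d ^ 2 / 8 := (min_le_right _ _).trans (min_le_right _ _)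
  obtain ⟨δ₁, hδ₁, C, hbound⟩ := exists_uniform_bound_integral hcont (hC.of_le one_le_two) hpos
    hlim hε₁ (by linarith) hh₀.1
  have hfirst : ε₁ / ((d - ε₁) * d) ≤ ε / 4 := by
    rw [div_le_iff₀ (mul_pos (by linarith) hd0)]
    nlinarith
  have hsecond : ∀ᶠ δ in 𝓝[>] 0, C * δ ^ (1 - (d + ε₁)) < ε / 2 := by
    have hcontAt : ContinuousAt (fun δ : ℝ => C * δ ^ (1 - (d + ε₁))) 0 := by
      fun_prop (disch := right; linarith)
    refine (hcontAt.tendsto.mono_left nhdsWithin_le_nhds).eventually (gt_mem_nhds ?_)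
    rw [Real.zero_rpow (by linarith), mul_zero]
    positivity
  obtain ⟨δ₂, hδ₂, hsmall⟩ := (nhdsGT_basis 0).mem_iff.1 hsecond
  refine ⟨min δ₁ δ₂, lt_min hδ₁ hδ₂, fun δ hδ hδlt t ht => ?_⟩
  simp only [hf]
  calc _ ≤ ε₁ / ((d - ε₁) * d) + C * δ ^ (1 - (d + ε₁)) :=
        hbound δ ⟨hδ, hδlt.trans_le (min_le_left _ _)⟩ t ht
    _ < ε / 4 + ε / 2 :=
        add_lt_add_of_le_of_lt hfirst (hsmall ⟨hδ, hδlt.trans_le (min_le_right _ _)⟩)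
    _ < ε := by linarith
end

section
/- Theorem 3 (Hölder continuity of fractional Lévy processes): Let d ∈ (0, 1/2) and let L be a two-sided Lévy process with E[L(1)] = 0, E[L(1)²] < ∞ and no Brownian component. Let M_d(t) = ∫_{−∞}^{∞} (1/Γ(d+1))[(t−r)₊^d − (−r)₊^d] dL(r) be the fractional Lévy process. Then P-almost surely, for every t ∈ ℝ, the sample path of M_d is Hölder continuous of order exactly d at t: there exist δ₀ > 0 and C = C(ω,t) such that |M_d(t+δ) − M_d(t)| ≤ C|δ|^d for all |δ| ≤ δ₀. -/
/-!
Write `K_s(r) = (s - r)₊^(d-1)`, so that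
`Γ(d) (M_d(t+δ) - M_d(t)) = ∫ (K_{t+δ} - K_t)(r) L(r) dr`.
On `(-T, ∞)` the càdlàg path is bounded and `∫ |K_{t+δ} - K_t| ≤ 2|δ|^d / d`. On the tail
`r ≤ -T` the kernel difference is `O(|δ| |r|^(d-2))` by the mean value theorem, while the law of
the iterated logarithm gives `|L(r)| ≤ |r|^(1/2+ε)`; the product is integrable as soon as
`d + 1/2 + ε < 1`, and `|δ| ≤ |δ|^d` for `|δ| ≤ 1`.
-/

open MeasureTheory ProbabilityTheory Filter Set intervalIntegral Real Topology

theorem exists_norm_le_of_tendsto_nhdsGE_nhdsLT {E : Type*} [SeminormedAddCommGroup E]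
    {f g : ℝ → E} (hrc : ∀ s, Tendsto f (𝓝[≥] s) (𝓝 (f s)))
    (hll : ∀ s, Tendsto f (𝓝[<] s) (𝓝 (g s))) {K : Set ℝ} (hK : IsCompact K) :
    ∃ B, ∀ r ∈ K, ‖f r‖ ≤ B := by
  have hloc : ∀ s, ∀ᶠ u in 𝓝 s, ‖f u‖ ≤ max ‖f s‖ ‖g s‖ + 1 := by
    intro s
    rw [← nhdsLT_sup_nhdsGE, eventually_sup]
    constructor
    · filter_upwards [(hll s).norm.eventually (gt_mem_nhds (lt_add_one ‖g s‖))] with u hu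
      linarith [le_max_right ‖f s‖ ‖g s‖]
    · filter_upwards [(hrc s).norm.eventually (gt_mem_nhds (lt_add_one ‖f s‖))] with u hu
      linarith [le_max_left ‖f s‖ ‖g s‖]
  obtain ⟨t, -, hcover⟩ := hK.elim_nhds_subcover _ (fun s _ => hloc s)
  refine ⟨∑ s ∈ t, (max ‖f s‖ ‖g s‖ + 1), fun r hr => ?_⟩
  obtain ⟨s, hs, hrs⟩ := mem_iUnion₂.1 (hcover hr)
  exact hrs.trans (Finset.single_le_sum (fun i _ => by positivity) hs)

theorem integrableOn_Iic_neg_rpow {q T : ℝ} (hq : q < -1) (hT : 0 < T) :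
    IntegrableOn (fun r : ℝ => (-r) ^ q) (Iic (-T)) := by
  have hpre : Neg.neg ⁻¹' Ici T = Iic (-T) := by ext; simp
  have h := (Measure.measurePreserving_neg (volume : Measure ℝ)).integrableOn_comp_preimage
    (Homeomorph.neg ℝ).measurableEmbedding (f := fun u : ℝ => u ^ q) (s := Ici T)
  rw [hpre] at h
  exact h.2 ((integrableOn_Ici_iff_integrableOn_Ioi).2 (integrableOn_Ioi_rpow_of_lt hq hT))

theorem rpow_sub_rpow_le_of_neg {x y q : ℝ} (hx : 0 < x) (hxy : x ≤ y) (hq : q < 0) :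
    x ^ q - y ^ q ≤ -q * (y - x) * x ^ (q - 1) := by
  rcases hxy.eq_or_lt with rfl | hlt
  · simp
  obtain ⟨c, hc, hderiv⟩ := exists_hasDerivAt_eq_slope (fun u : ℝ => u ^ q)
      (fun u : ℝ => q * u ^ (q - 1)) hlt
      (fun u hu =>
        (continuousAt_rpow_const u q (Or.inl (hx.trans_le hu.1).ne')).continuousWithinAt)
      (fun u hu => hasDerivAt_rpow_const (Or.inl (hx.trans hu.1).ne'))
  have hmvt : x ^ q - y ^ q = -q * (y - x) * c ^ (q - 1) := by
    rw [eq_div_iff (sub_ne_zero.2 hlt.ne')] at hderiv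
    linear_combination hderiv
  rw [hmvt]
  have hc_le : c ^ (q - 1) ≤ x ^ (q - 1) := rpow_le_rpow_of_nonpos hx hc.1.le (by linarith)
  exact mul_le_mul_of_nonneg_left hc_le (mul_nonneg (by linarith) (by linarith))

/-- The Riemann–Liouville kernel `(s - r)₊ ^ (d - 1)`. Since `0 ^ (d - 1) = 0` for `d ≠ 1`, it
vanishes for `r ≥ s`, including at the singular point `r = s`. -/
noncomputable def fracKernel (d s r : ℝ) : ℝ := (max (s - r) 0) ^ (d - 1)

section fracKernel

variable {d s r a b c : ℝ}

theorem fracKernel_nonneg : 0 ≤ fracKernel d s r := rpow_nonneg (le_max_right _ _) _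

theorem fracKernel_of_lt (h : r < s) : fracKernel d s r = (s - r) ^ (d - 1) := by
  rw [fracKernel, max_eq_left (sub_pos.2 h).le]

theorem fracKernel_of_le (hd : d ≠ 1) (h : s ≤ r) : fracKernel d s r = 0 := by
  rw [fracKernel, max_eq_right (sub_nonpos.2 h), zero_rpow (sub_ne_zero.2 hd)]

theorem measurable_fracKernel : Measurable (fracKernel d s) := by
  unfold fracKernel; fun_prop

theorem fracKernel_le_fracKernel (hd : d ≤ 1) (hr : r < a) (hab : a ≤ b) :
    fracKernel d b r ≤ fracKernel d a r := by
  rw [fracKernel_of_lt hr, fracKernel_of_lt (hr.trans_le hab)]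
  exact rpow_le_rpow_of_nonpos (sub_pos.2 hr) (by linarith) (by linarith)

theorem intervalIntegrable_fracKernel (hd : 0 < d) :
    IntervalIntegrable (fracKernel d s) volume a b := by
  have hpos : IntervalIntegrable (fun u : ℝ => (max u 0) ^ (d - 1)) volume (s - a) (s - b) := by
    refine (intervalIntegrable_rpow' (r := d - 1) (by linarith)).mono_fun
      (by fun_prop : Measurable fun u : ℝ => (max u 0) ^ (d - 1)).aestronglyMeasurable
      (ae_of_all _ fun u => ?_)
    dsimp only
    rcases le_or_gt u 0 with hu | hu
    · rw [max_eq_right hu]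
      rcases eq_or_ne (d - 1) 0 with h | h
      · simp [h]
      · rw [zero_rpow h, norm_zero]
        exact norm_nonneg _
    · rw [max_eq_left hu.le]
  have h := hpos.comp_sub_left s
  rw [sub_sub_cancel, sub_sub_cancel] at h
  exact h

theorem integrableOn_Ioi_fracKernel (hd0 : 0 < d) (hd1 : d < 1) :
    IntegrableOn (fracKernel d s) (Ioi c) :=
  (intervalIntegrable_fracKernel hd0).1.of_forall_sdiff_eq_zero measurableSet_Ioi
    fun _ hr => fracKernel_of_le hd1.ne (le_of_not_ge fun h => hr.2 ⟨hr.1, h⟩)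

theorem integral_fracKernel (hd : 0 < d) (ha : a ≤ s) (hb : b ≤ s) :
    ∫ r in a..b, fracKernel d s r = ((s - a) ^ d - (s - b) ^ d) / d := by
  unfold fracKernel
  rw [integral_comp_sub_left (fun u => (max u 0) ^ (d - 1)) s,
    integral_congr (g := fun u => u ^ (d - 1)) fun u hu => ?_,
    integral_rpow (Or.inl (by linarith)), sub_add_cancel]
  have hu0 : 0 ≤ u := le_trans (le_min (sub_nonneg.2 hb) (sub_nonneg.2 ha)) hu.1
  simp only [max_eq_left hu0]

theorem integral_Ioi_abs_fracKernel_sub_le (hd0 : 0 < d) (hd1 : d < 1) (hc : c ≤ a)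
    (hab : a ≤ b) :
    ∫ r in Ioi c, |fracKernel d b r - fracKernel d a r| ≤ 2 * (b - a) ^ d / d := by
  have hint : ∀ x y, IntervalIntegrable (fun r => |fracKernel d b r - fracKernel d a r|)
      volume x y := fun x y =>
    ((intervalIntegrable_fracKernel hd0).sub (intervalIntegrable_fracKernel hd0)).abs
  have hsupp : ∀ r ∈ Ioi c \ Ioc c b, |fracKernel d b r - fracKernel d a r| = 0 := by
    rintro r ⟨hrc, hrb⟩
    have hbr : b ≤ r := le_of_not_ge fun h => hrb ⟨hrc, h⟩
    rw [fracKernel_of_le hd1.ne hbr, fracKernel_of_le hd1.ne (hab.trans hbr), sub_self, abs_zero]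
  have hleft : ∫ r in c..a, |fracKernel d b r - fracKernel d a r|
      = ∫ r in c..a, (fracKernel d a r - fracKernel d b r) := by
    refine integral_congr_ae ((volume : Measure ℝ).ae_ne a |>.mono fun r hra hr => ?_)
    rw [uIoc_of_le hc] at hr
    rw [abs_sub_comm, abs_of_nonneg (sub_nonneg.2 (fracKernel_le_fracKernel hd1.le
      (lt_of_le_of_ne hr.2 hra) hab))]
  have hright : ∫ r in a..b, |fracKernel d b r - fracKernel d a r|
      = ∫ r in a..b, fracKernel d b r := by
    refine integral_congr fun r hr => ?_
    rw [uIcc_of_le hab] at hr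
    rw [fracKernel_of_le hd1.ne hr.1, sub_zero, abs_of_nonneg fracKernel_nonneg]
  rw [setIntegral_eq_of_subset_of_forall_sdiff_eq_zero measurableSet_Ioi Ioc_subset_Ioi_self
    hsupp, ← integral_of_le (hc.trans hab), ← integral_add_adjacent_intervals (hint c a)
    (hint a b), hleft, hright, integral_sub (intervalIntegrable_fracKernel hd0)
    (intervalIntegrable_fracKernel hd0), integral_fracKernel hd0 hc le_rfl,
    integral_fracKernel hd0 (hc.trans hab) hab, integral_fracKernel hd0 hab le_rfl, sub_self,
    zero_rpow hd0.ne']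
  have hmono : (a - c) ^ d ≤ (b - c) ^ d := rpow_le_rpow (by linarith) (by linarith) hd0.le
  rw [sub_self, zero_rpow hd0.ne', ← sub_div, ← add_div, div_le_div_iff_of_pos_right hd0]
  linarith

theorem abs_fracKernel_sub_le (hd1 : d < 1) (hr : r < a) (hab : a ≤ b) :
    |fracKernel d b r - fracKernel d a r| ≤ (1 - d) * (b - a) * (a - r) ^ (d - 2) := by
  rw [abs_sub_comm, abs_of_nonneg (sub_nonneg.2 (fracKernel_le_fracKernel hd1.le hr hab)),
    fracKernel_of_lt hr, fracKernel_of_lt (hr.trans_le hab)]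
  convert rpow_sub_rpow_le_of_neg (sub_pos.2 hr) (sub_le_sub_right hab r)
    (by linarith : d - 1 < 0) using 2 <;> ring_nf

end fracKernel

/-- For a path `ℓ` of `L`, `fracIntegral d ℓ s` is `Γ(d) M_d(s)` in the moving-average
representation of `M_d`. -/
noncomputable def fracIntegral (d : ℝ) (ℓ : ℝ → ℝ) (s : ℝ) : ℝ :=
  ∫ r, (fracKernel d s r - fracKernel d 0 r) * ℓ r

section fracIntegral

variable {d p T B a b c s : ℝ} {ℓ : ℝ → ℝ}

theorem abs_fracKernel_sub_mul_le_of_neg {r x : ℝ} (hd1 : d < 1) (hr : r < 0) (ha : r ≤ 2 * a)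
    (hab : a ≤ b) (hx : |x| ≤ (-r) ^ p) :
    |(fracKernel d b r - fracKernel d a r) * x|
      ≤ (1 - d) * 2 ^ (2 - d) * (b - a) * (-r) ^ (d - 2 + p) := by
  have hr0 : 0 < -r := neg_pos.2 hr
  have hhalf : (a - r) ^ (d - 2) ≤ 2 ^ (2 - d) * (-r) ^ (d - 2) := calc
    (a - r) ^ (d - 2) ≤ (-r / 2) ^ (d - 2) :=
      rpow_le_rpow_of_nonpos (by positivity) (by linarith) (by linarith)
    _ = 2 ^ (2 - d) * (-r) ^ (d - 2) := by
      rw [div_rpow hr0.le zero_le_two, div_eq_mul_inv, ← rpow_neg zero_le_two, neg_sub,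
        mul_comm]
  rw [abs_mul, rpow_add hr0]
  calc |fracKernel d b r - fracKernel d a r| * |x|
      ≤ ((1 - d) * (b - a) * (2 ^ (2 - d) * (-r) ^ (d - 2))) * (-r) ^ p := by
        gcongr
        exact (abs_fracKernel_sub_le hd1 (by linarith) hab).trans
          (mul_le_mul_of_nonneg_left hhalf (by nlinarith))
    _ = (1 - d) * 2 ^ (2 - d) * (b - a) * ((-r) ^ (d - 2) * (-r) ^ p) := by ring

theorem exists_dominator_fracKernel_sub_mul (hd0 : 0 < d) (hd1 : d < 1) (hdp : d + p < 1)
    (hT : 0 < T) (ha : -T ≤ 2 * a) (hab : a ≤ b) (htail : ∀ r ≤ -T, |ℓ r| ≤ (-r) ^ p)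
    (hB : ∀ r ∈ Ioc (-T) b, |ℓ r| ≤ B) :
    ∃ g : ℝ → ℝ, Integrable g ∧ (∀ r, |(fracKernel d b r - fracKernel d a r) * ℓ r| ≤ g r) ∧
      ∫ r, g r ≤ 2 * B / d * (b - a) ^ d
        + (1 - d) * 2 ^ (2 - d) * (∫ r in Iic (-T), (-r) ^ (d - 2 + p)) * (b - a) := by
  set κ := (1 - d) * 2 ^ (2 - d) * (b - a)
  have hB0 : 0 ≤ B := (abs_nonneg _).trans (hB b ⟨by linarith, le_rfl⟩)
  have hnear : IntegrableOn (fun r => B * |fracKernel d b r - fracKernel d a r|) (Ioi (-T)) :=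
    ((integrableOn_Ioi_fracKernel hd0 hd1).sub (integrableOn_Ioi_fracKernel hd0 hd1)).abs
      |>.const_mul B
  have hfar : IntegrableOn (fun r => κ * (-r) ^ (d - 2 + p)) (Iic (-T)) :=
    (integrableOn_Iic_neg_rpow (by linarith) hT).const_mul κ
  refine ⟨fun r => (Ioi (-T)).indicator (fun r => B * |fracKernel d b r - fracKernel d a r|) r
      + (Iic (-T)).indicator (fun r => κ * (-r) ^ (d - 2 + p)) r,
    (hnear.integrable_indicator measurableSet_Ioi).add
      (hfar.integrable_indicator measurableSet_Iic), fun r => ?_, ?_⟩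
  · beta_reduce
    rcases le_or_gt r (-T) with hr | hr
    · rw [indicator_of_notMem (show r ∉ Ioi (-T) from not_lt.2 hr),
        indicator_of_mem (show r ∈ Iic (-T) from hr), zero_add]
      exact abs_fracKernel_sub_mul_le_of_neg hd1 (by linarith) (by linarith) hab (htail r hr)
    · rw [indicator_of_mem (show r ∈ Ioi (-T) from hr),
        indicator_of_notMem (show r ∉ Iic (-T) from not_le.2 hr), add_zero, abs_mul, mul_comm]
      rcases le_or_gt r b with hrb | hrb
      · exact mul_le_mul_of_nonneg_right (hB r ⟨hr, hrb⟩) (abs_nonneg _)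
      · rw [fracKernel_of_le hd1.ne hrb.le, fracKernel_of_le hd1.ne (hab.trans hrb.le)]
        simp
  · rw [integral_add (hnear.integrable_indicator measurableSet_Ioi)
      (hfar.integrable_indicator measurableSet_Iic),
      MeasureTheory.integral_indicator measurableSet_Ioi,
      MeasureTheory.integral_indicator measurableSet_Iic, MeasureTheory.integral_const_mul,
      MeasureTheory.integral_const_mul]
    have hnear_le := mul_le_mul_of_nonneg_left
      (integral_Ioi_abs_fracKernel_sub_le hd0 hd1 (by linarith : -T ≤ a) hab) hB0
    calc _ ≤ B * (2 * (b - a) ^ d / d) + κ * ∫ r in Iic (-T), (-r) ^ (d - 2 + p) := by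
          gcongr
      _ = _ := by ring

theorem integrable_fracKernel_sub_fracKernel_zero_mul (hd0 : 0 < d) (hd1 : d < 1)
    (hdp : d + p < 1) (hT : 0 < T) (hs : -T ≤ 2 * s) (hℓ : Measurable ℓ)
    (htail : ∀ r ≤ -T, |ℓ r| ≤ (-r) ^ p) (hB : ∀ r ∈ Ioc (-T) (max s 0), |ℓ r| ≤ B) :
    Integrable fun r => (fracKernel d s r - fracKernel d 0 r) * ℓ r := by
  have hmeas : ∀ a b,
      AEStronglyMeasurable fun r => (fracKernel d b r - fracKernel d a r) * ℓ r :=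
    fun _ _ => ((measurable_fracKernel.sub measurable_fracKernel).mul hℓ).aestronglyMeasurable
  rcases le_total 0 s with h0s | hs0
  · obtain ⟨g, hg, hle, -⟩ := exists_dominator_fracKernel_sub_mul hd0 hd1 hdp hT (by linarith)
      h0s htail (by rwa [max_eq_left h0s] at hB)
    exact hg.mono' (hmeas 0 s) (ae_of_all _ hle)
  · obtain ⟨g, hg, hle, -⟩ := exists_dominator_fracKernel_sub_mul hd0 hd1 hdp hT hs hs0 htail
      (by rwa [max_eq_right hs0] at hB)
    refine (hg.mono' (hmeas s 0) (ae_of_all _ hle)).neg.congr (ae_of_all _ fun r => ?_)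
    simp only [Pi.neg_apply, ← neg_mul, neg_sub]

theorem fracIntegral_sub (ha : Integrable fun r => (fracKernel d a r - fracKernel d 0 r) * ℓ r)
    (hb : Integrable fun r => (fracKernel d b r - fracKernel d 0 r) * ℓ r) :
    fracIntegral d ℓ b - fracIntegral d ℓ a
      = ∫ r, (fracKernel d b r - fracKernel d a r) * ℓ r := by
  rw [fracIntegral, fracIntegral, ← integral_sub hb ha]
  congr 1 with r
  ring

theorem abs_fracIntegral_sub_le (hd0 : 0 < d) (hd1 : d < 1) (hdp : d + p < 1)
    (hℓ : Measurable ℓ) (hT : 0 < T) (htail : ∀ r ≤ -T, |ℓ r| ≤ (-r) ^ p)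
    (hB : ∀ r ∈ Ioc (-T) c, |ℓ r| ≤ B) (ha : -T ≤ 2 * a) (hab : a ≤ b) (hbc : b ≤ c)
    (hc : 0 ≤ c) (hba : b - a ≤ 1) :
    |fracIntegral d ℓ b - fracIntegral d ℓ a|
      ≤ (2 * B / d + (1 - d) * 2 ^ (2 - d) * ∫ r in Iic (-T), (-r) ^ (d - 2 + p))
        * (b - a) ^ d := by
  have hint : ∀ s, -T ≤ 2 * s → s ≤ c →
      Integrable fun r => (fracKernel d s r - fracKernel d 0 r) * ℓ r := fun s hs hsc =>
    integrable_fracKernel_sub_fracKernel_zero_mul hd0 hd1 hdp hT hs hℓ htail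
      fun r hr => hB r ⟨hr.1, hr.2.trans (max_le hsc hc)⟩
  obtain ⟨g, hg, hle, hgint⟩ := exists_dominator_fracKernel_sub_mul hd0 hd1 hdp hT ha hab htail
    fun r hr => hB r ⟨hr.1, hr.2.trans hbc⟩
  have htail_nonneg : 0 ≤ (1 - d) * 2 ^ (2 - d) * ∫ r in Iic (-T), (-r) ^ (d - 2 + p) :=
    mul_nonneg (mul_nonneg (by linarith) (by positivity))
      (setIntegral_nonneg measurableSet_Iic fun r hr => rpow_nonneg (by linarith [hr.out]) _)
  have hpow : b - a ≤ (b - a) ^ d := self_le_rpow_of_le_one (by linarith) hba hd1.le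
  rw [fracIntegral_sub (hint a ha (hab.trans hbc)) (hint b (by linarith) hbc)]
  calc |∫ r, (fracKernel d b r - fracKernel d a r) * ℓ r| ≤ ∫ r, g r := by
        rw [← Real.norm_eq_abs]
        exact norm_integral_le_of_norm_le hg (ae_of_all _ hle)
    _ ≤ _ := hgint
    _ ≤ _ := by rw [add_mul, mul_div_right_comm]; gcongr

theorem exists_abs_fracIntegral_sub_le (hd0 : 0 < d) (hd1 : d < 1) (hdp : d + p < 1)
    (hℓ : Measurable ℓ) (hbdd : ∀ a b, ∃ B, ∀ r ∈ Icc a b, |ℓ r| ≤ B)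
    (htail : ∃ T, ∀ r ≤ -T, |ℓ r| ≤ (-r) ^ p) (t : ℝ) :
    ∃ C, ∀ δ, |δ| ≤ 1 → |fracIntegral d ℓ (t + δ) - fracIntegral d ℓ t| ≤ C * |δ| ^ d := by
  obtain ⟨T₀, hT₀⟩ := htail
  set T := max T₀ (2 * |t| + 2)
  have hT : 0 < T := lt_max_of_lt_right (by positivity)
  have hlow : -T ≤ 2 * (t - 1) := by
    linarith [le_max_right T₀ (2 * |t| + 2), neg_abs_le t]
  have htailT : ∀ r ≤ -T, |ℓ r| ≤ (-r) ^ p := fun r hr =>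
    hT₀ r (hr.trans (neg_le_neg (le_max_left _ _)))
  obtain ⟨B, hB⟩ := hbdd (-T) (|t| + 1)
  have hB' : ∀ r ∈ Ioc (-T) (|t| + 1), |ℓ r| ≤ B := fun r hr => hB r (Ioc_subset_Icc_self hr)
  refine ⟨2 * B / d + (1 - d) * 2 ^ (2 - d) * ∫ r in Iic (-T), (-r) ^ (d - 2 + p),
    fun δ hδ => ?_⟩
  obtain ⟨hδl, hδu⟩ := abs_le.1 hδ
  rcases le_total 0 δ with hδ0 | hδ0
  · have h := abs_fracIntegral_sub_le (a := t) (b := t + δ) hd0 hd1 hdp hℓ hT htailT hB'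
      (by linarith) (le_add_of_nonneg_right hδ0) (by linarith [le_abs_self t]) (by positivity)
      (by linarith)
    rw [abs_of_nonneg hδ0]
    rwa [add_sub_cancel_left] at h
  · have h := abs_fracIntegral_sub_le (a := t + δ) (b := t) hd0 hd1 hdp hℓ hT htailT hB'
      (by linarith) (add_le_of_nonpos_right hδ0) (by linarith [le_abs_self t]) (by positivity)
      (by linarith)
    rw [abs_of_nonpos hδ0]
    rwa [abs_sub_comm, sub_add_cancel_left] at h

end fracIntegral

theorem theorem3_holder_fractional_levy_general
    {Ω : Type*} [MeasureSpace Ω]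
    (d : ℝ) (hd : d ∈ Set.Ioo (0:ℝ) (1/2))
    (L Lm Md : ℝ → Ω → ℝ)
    (hLrc : ∀ᵐ ω ∂(ℙ : Measure Ω), ∀ s : ℝ,
      Tendsto (fun u => L u ω) (nhdsWithin s (Set.Ici s)) (nhds (L s ω)))
    (hLll : ∀ᵐ ω ∂(ℙ : Measure Ω), ∀ s : ℝ,
      Tendsto (fun u => L u ω) (nhdsWithin s (Set.Iio s)) (nhds (Lm s ω)))
    (hLmeas : ∀ ω : Ω, Measurable (fun r => L r ω))
    -- consequence of the LIL at infinity (Sato, Prop. 48.9), valid since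
    -- `E[L(1)] = 0` and `E[L(1)²] < ∞`:
    (hLIL : ∀ ε > (0:ℝ), ∀ᵐ ω ∂(ℙ : Measure Ω), ∃ S > (1:ℝ), ∀ s : ℝ, S ≤ s →
      |L (-s) ω| ≤ s ^ ((1:ℝ)/2 + ε) ∧ |L s ω| ≤ s ^ ((1:ℝ)/2 + ε))
    -- moving-average representation (Marquardt, Thm. 3.4):
    (hMd : ∀ᵐ ω ∂(ℙ : Measure Ω), ∀ t : ℝ,
      Md t ω = (1 / Real.Gamma d) *
        ∫ r : ℝ, ((max (t - r) 0) ^ (d - 1) - (max (-r) 0) ^ (d - 1)) * L r ω) :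
    ∀ᵐ ω ∂(ℙ : Measure Ω), ∀ t : ℝ, ∃ δ₀ > (0:ℝ), ∃ C : ℝ,
      ∀ δ : ℝ, |δ| ≤ δ₀ → |Md (t + δ) ω - Md t ω| ≤ C * |δ| ^ d := by
  obtain ⟨hd0, hd2⟩ := hd
  -- the growth exponent `1/2 + ε` of the path is chosen so that `d + (1/2 + ε) < 1`
  filter_upwards [hLrc, hLll, hLIL ((1 / 2 - d) / 2) (by linarith), hMd]
    with ω hrc hll hlil hM t
  obtain ⟨S, -, hS⟩ := hlil
  have hbdd : ∀ a b, ∃ B, ∀ r ∈ Icc a b, |L r ω| ≤ B := fun a b =>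
    exists_norm_le_of_tendsto_nhdsGE_nhdsLT hrc hll isCompact_Icc
  have htail : ∀ r ≤ -S, |L r ω| ≤ (-r) ^ ((1 : ℝ) / 2 + (1 / 2 - d) / 2) := fun r hr => by
    simpa only [neg_neg] using (hS (-r) (le_neg.2 hr)).1
  obtain ⟨C, hC⟩ := exists_abs_fracIntegral_sub_le hd0 (by linarith) (by linarith) (hLmeas ω)
    hbdd ⟨S, htail⟩ t
  have hMF : ∀ s, Md s ω = 1 / Gamma d * fracIntegral d (fun r => L r ω) s := fun s => by
    simp only [hM s, fracIntegral, fracKernel, zero_sub]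
  refine ⟨1, one_pos, |1 / Gamma d| * C, fun δ hδ => ?_⟩
  rw [hMF, hMF, ← mul_sub, abs_mul, mul_assoc]
  exact mul_le_mul_of_nonneg_left (hC δ hδ) (abs_nonneg _)

/-- Theorem 3: for `d ∈ (0,1/2)` and a two-sided Lévy process `L`
with mean zero, finite second moment and no Brownian component (encoded through
its sample-path properties: càdlàg paths vanishing at `0` and the
law-of-the-iterated-logarithm growth bound `|L(−s)| ≲ s^{1/2+ε}` at infinity),
the fractional Lévy process, via its moving-average representation
`M_d(t) = (1/Γ(d)) ∫_ℝ [(t−r)₊^{d−1} − (−r)₊^{d−1}] L(r) dr`, is a.s. Hölder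
continuous of order `d` at every `t ∈ ℝ`. -/
theorem theorem3_holder_fractional_levy
    {Ω : Type*} [MeasureSpace Ω] [IsProbabilityMeasure (ℙ : Measure Ω)]
    (d : ℝ) (hd : d ∈ Set.Ioo (0:ℝ) (1/2))
    (L Lm Md : ℝ → Ω → ℝ)
    (hLrc : ∀ᵐ ω ∂(ℙ : Measure Ω), ∀ s : ℝ,
      Tendsto (fun u => L u ω) (nhdsWithin s (Set.Ici s)) (nhds (L s ω)))
    (hLll : ∀ᵐ ω ∂(ℙ : Measure Ω), ∀ s : ℝ,
      Tendsto (fun u => L u ω) (nhdsWithin s (Set.Iio s)) (nhds (Lm s ω)))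
    (hL0 : ∀ᵐ ω ∂(ℙ : Measure Ω), L 0 ω = 0)
    (hLmeas : ∀ ω : Ω, Measurable (fun r => L r ω))
    -- consequence of the LIL at infinity (Sato, Prop. 48.9), valid since
    -- `E[L(1)] = 0` and `E[L(1)²] < ∞`:
    (hLIL : ∀ ε > (0:ℝ), ∀ᵐ ω ∂(ℙ : Measure Ω), ∃ S > (1:ℝ), ∀ s : ℝ, S ≤ s →
      |L (-s) ω| ≤ s ^ ((1:ℝ)/2 + ε) ∧ |L s ω| ≤ s ^ ((1:ℝ)/2 + ε))
    -- moving-average representation (Marquardt, Thm. 3.4):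
    (hMd : ∀ᵐ ω ∂(ℙ : Measure Ω), ∀ t : ℝ,
      Md t ω = (1 / Real.Gamma d) *
        ∫ r : ℝ, ((max (t - r) 0) ^ (d - 1) - (max (-r) 0) ^ (d - 1)) * L r ω) :
    ∀ᵐ ω ∂(ℙ : Measure Ω), ∀ t : ℝ, ∃ δ₀ > (0:ℝ), ∃ C : ℝ,
      ∀ δ : ℝ, |δ| ≤ δ₀ → |Md (t + δ) ω - Md t ω| ≤ C * |δ| ^ d :=
  theorem3_holder_fractional_levy_general d hd L Lm Md hLrc hLll hLmeas hLIL hMd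
end

section
/- Hölder continuity of order d for the restricted fractional process: Let d ∈ (0,1), let X be a semimartingale with X(0) = X(0−) = 0 a.s., and let M(t) = (1/Γ(d+1)) ∫₀ᵗ (t−s)^d dX(s). Then P-almost surely, for every t ∈ (0,1) there exist δ₁ > 0 and C₁ = C₁(ω) such that |M(t+δ) − M(t)| ≤ C₁|δ|^d for all δ ∈ (−δ₁, δ₁); indeed one can take any C₁ > (1/Γ(d+1)) sup_{s∈[0,1]} |Δ_X(s)|. -/
/-!
Fix a path `f = X(·, ω)` and a time `t`, and write `f = f(t−) + g`. The constant part contributes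
an increment `O(|δ|)` to `∫₀ᵗ (t − r)^{d−1} f(r) dr`. For `g`, split the increment between `t` and
`t + δ` into the fresh piece `∫ₜ^{t+δ}`, where `|g| ≤ |Δf(t)| + ε`, the piece over a short window
`(m, t)` below `t`, where `|g| ≤ ε` and the kernel difference integrates to at most `|δ|^d / d`,
and the far piece over `(0, m)`, where the kernel is smooth and the contribution is `O(|δ|)`.
Since `d < 1`, the `O(|δ|)` terms are `o(|δ|^d)`, so the increment is at most
`(|Δf(t)| + ε) |δ|^d / d`, and `d Γ(d) = Γ(d + 1)`. Càdlàg paths are Borel measurable and bounded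
on compacts, so all these integrals converge.
-/

open MeasureTheory ProbabilityTheory Filter Set intervalIntegral Real

open Topology

theorem measurable_of_forall_continuousWithinAt_Ici {β : Type*} [TopologicalSpace β]
    [TopologicalSpace.PseudoMetrizableSpace β] [MeasurableSpace β] [BorelSpace β] {f : ℝ → β}
    (hf : ∀ x, ContinuousWithinAt f (Ici x) x) : Measurable f := by
  -- `f` is the pointwise limit of `f` composed with rounding up to the grid `ℤ / (n + 1)`.
  set φ : ℕ → ℝ → ℝ := fun n x => ⌈x * (n + 1)⌉ / (n + 1)
  have hφ_meas (n : ℕ) : Measurable fun x => f (φ n x) :=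
    (measurable_from_top (f := fun k : ℤ => f (k / (n + 1)))).comp
      (Int.measurable_ceil.comp (measurable_id.mul_const _))
  refine measurable_of_tendsto_metrizable hφ_meas
    (tendsto_pi_nhds.2 fun x => (hf x).tendsto.comp ?_)
  have hlow (n : ℕ) : x ≤ φ n x := by
    rw [le_div_iff₀ (by positivity)]; exact Int.le_ceil _
  have hup (n : ℕ) : φ n x ≤ x + 1 / (n + 1) := by
    rw [div_le_iff₀ (by positivity), add_mul, one_div_mul_cancel (by positivity)]
    exact (Int.ceil_lt_add_one _).le
  refine tendsto_nhdsWithin_of_tendsto_nhds_of_eventually_within _ ?_ (Eventually.of_forall hlow)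
  refine tendsto_of_tendsto_of_tendsto_of_le_of_le tendsto_const_nhds ?_ hlow hup
  simpa using (tendsto_const_nhds (x := x)).add tendsto_one_div_add_atTop_nhds_zero_nat

theorem eventually_abs_le_of_cadlag {f : ℝ → ℝ} {L : ℝ} {s : ℝ}
    (hrc : Tendsto f (𝓝[≥] s) (𝓝 (f s))) (hll : Tendsto f (𝓝[<] s) (𝓝 L)) :
    ∀ᶠ u in 𝓝 s, |f u| ≤ max |f s| |L| + 1 := by
  rw [← nhdsLT_sup_nhdsGE, eventually_sup]
  exact ⟨hll.abs.eventually_le_const (by linarith [le_max_right |f s| |L|]),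
    hrc.abs.eventually_le_const (by linarith [le_max_left |f s| |L|])⟩

theorem bddAbove_abs_image_of_cadlag {f g : ℝ → ℝ}
    (hrc : ∀ s, Tendsto f (𝓝[≥] s) (𝓝 (f s))) (hll : ∀ s, Tendsto f (𝓝[<] s) (𝓝 (g s)))
    {K : Set ℝ} (hK : IsCompact K) : BddAbove ((fun s => |f s|) '' K) := by
  refine hK.induction_on (by simp) (fun s t hst ht => ht.mono (image_mono hst))
    (fun s t hs ht => by simpa only [image_union] using hs.union ht) fun s _ => ?_
  exact ⟨_, mem_nhdsWithin_of_mem_nhds (eventually_abs_le_of_cadlag (hrc s) (hll s)),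
    ⟨_, forall_mem_image.2 fun u hu => hu⟩⟩

theorem bddAbove_abs_jump_of_cadlag {f g : ℝ → ℝ}
    (hrc : ∀ s, Tendsto f (𝓝[≥] s) (𝓝 (f s))) (hll : ∀ s, Tendsto f (𝓝[<] s) (𝓝 (g s)))
    {K : Set ℝ} (hK : IsCompact K) : BddAbove {y | ∃ s ∈ K, y = |f s - g s|} := by
  obtain ⟨K', hK', hKK'⟩ := exists_compact_superset hK
  obtain ⟨B, hB⟩ := bddAbove_abs_image_of_cadlag hrc hll hK'
  have hfB : ∀ s ∈ K', |f s| ≤ B := fun s hs => hB (mem_image_of_mem _ hs)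
  have hgB : ∀ s ∈ K, |g s| ≤ B := fun s hs =>
    le_of_tendsto (hll s).abs (eventually_nhdsWithin_of_eventually_nhds
      (eventually_of_mem (mem_interior_iff_mem_nhds.1 (hKK' hs)) hfB))
  refine ⟨B + B, ?_⟩
  rintro y ⟨s, hs, rfl⟩
  exact (abs_sub _ _).trans (add_le_add (hfB s (interior_subset (hKK' hs))) (hgB s hs))

/-- `Γ(d)` times the Riemann–Liouville integral of order `d` of `f`, based at `0`. -/
noncomputable def rlIntegral (d : ℝ) (f : ℝ → ℝ) (t : ℝ) : ℝ :=
  ∫ r in (0:ℝ)..t, (t - r) ^ (d - 1) * f r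

section Kernel

variable {d : ℝ}

theorem intervalIntegrable_sub_rpow (hd : 0 < d) (c a b : ℝ) :
    IntervalIntegrable (fun r => (c - r) ^ (d - 1)) volume a b := by
  simpa using (intervalIntegrable_rpow' (a := c - a) (b := c - b)
    (by linarith : -1 < d - 1)).comp_sub_left c

theorem intervalIntegrable_sub_rpow_mul (hd : 0 < d) {f : ℝ → ℝ} {B : ℝ} (hf : Measurable f)
    (hB : ∀ r, |f r| ≤ B) (c a b : ℝ) :
    IntervalIntegrable (fun r => (c - r) ^ (d - 1) * f r) volume a b := by
  have hk := intervalIntegrable_sub_rpow hd c a b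
  have hB' : ∀ᵐ r ∂volume, ‖f r‖ ≤ B := ae_of_all _ hB
  exact ⟨hk.1.mul_bdd hf.aestronglyMeasurable (ae_restrict_of_ae hB'),
    hk.2.mul_bdd hf.aestronglyMeasurable (ae_restrict_of_ae hB')⟩

theorem integral_sub_rpow (hd : 0 < d) (c a b : ℝ) :
    ∫ r in a..b, (c - r) ^ (d - 1) = ((c - a) ^ d - (c - b) ^ d) / d := by
  rw [integral_comp_sub_left (fun x => x ^ (d - 1)), integral_rpow (Or.inl (by linarith)),
    sub_add_cancel]

theorem abs_rpow_sub_rpow_le {p x y : ℝ} (hp : p ≤ 1) (hx : 0 < x) (hxy : x ≤ y) :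
    |y ^ p - x ^ p| ≤ |p| * x ^ (p - 1) * (y - x) := by
  have hderiv : ∀ z ∈ Icc x y, HasDerivWithinAt (· ^ p) (p * z ^ (p - 1)) (Icc x y) z :=
    fun z hz => (hasDerivAt_rpow_const (Or.inl (by linarith [hz.1]))).hasDerivWithinAt
  have hbound : ∀ z ∈ Icc x y, ‖p * z ^ (p - 1)‖ ≤ |p| * x ^ (p - 1) := fun z hz => by
    rw [norm_mul, norm_eq_abs, norm_of_nonneg (rpow_nonneg (hx.trans_le hz.1).le _)]
    exact mul_le_mul_of_nonneg_left (rpow_le_rpow_of_nonpos hx hz.1 (by linarith)) (abs_nonneg _)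
  simpa [abs_of_nonneg (sub_nonneg.2 hxy)] using
    (convex_Icc x y).norm_image_sub_le_of_norm_hasDerivWithin_le hderiv hbound
      (left_mem_Icc.2 hxy) (right_mem_Icc.2 hxy)

theorem abs_integral_mul_le_mul_integral {w g : ℝ → ℝ} {a b K : ℝ} (hab : a ≤ b)
    (hw : IntervalIntegrable w volume a b) (hw0 : ∀ r ∈ Ioo a b, 0 ≤ w r)
    (hg : ∀ r ∈ Ioo a b, |g r| ≤ K) :
    |∫ r in a..b, w r * g r| ≤ K * ∫ r in a..b, w r := by
  rw [← intervalIntegral.integral_const_mul]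
  refine (norm_eq_abs _).symm.trans_le (norm_integral_le_of_norm_le hab ?_ (hw.const_mul K))
  filter_upwards [Measure.ae_ne volume b] with r hrb hr
  have hr' : r ∈ Ioo a b := ⟨hr.1, lt_of_le_of_ne hr.2 hrb⟩
  rw [norm_mul, norm_of_nonneg (hw0 r hr'), mul_comm K, norm_eq_abs]
  exact mul_le_mul_of_nonneg_left (hg r hr') (hw0 r hr')

theorem abs_integral_sub_rpow_mul_le (hd : 0 < d) {g : ℝ → ℝ} {u v K : ℝ} (huv : u ≤ v)
    (hg : ∀ r ∈ Ioo u v, |g r| ≤ K) :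
    |∫ r in u..v, (v - r) ^ (d - 1) * g r| ≤ K * ((v - u) ^ d / d) := by
  have h := abs_integral_mul_le_mul_integral huv (intervalIntegrable_sub_rpow hd v u v)
    (fun r hr => rpow_nonneg (by linarith [hr.2]) _) hg
  rwa [integral_sub_rpow hd, sub_self, zero_rpow hd.ne', sub_zero] at h

theorem abs_integral_rpow_sub_rpow_mul_le (hd0 : 0 < d) (hd1 : d ≤ 1) {g : ℝ → ℝ}
    {m u v K : ℝ} (hmu : m < u) (huv : u ≤ v) (hg : ∀ r ∈ Ioo m u, |g r| ≤ K) :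
    |∫ r in m..u, ((u - r) ^ (d - 1) - (v - r) ^ (d - 1)) * g r| ≤ K * ((v - u) ^ d / d) := by
  have hK : 0 ≤ K := (abs_nonneg _).trans (hg ((m + u) / 2) ⟨by linarith, by linarith⟩)
  have hw0 : ∀ r ∈ Ioo m u, 0 ≤ (u - r) ^ (d - 1) - (v - r) ^ (d - 1) := fun r hr =>
    sub_nonneg.2 (rpow_le_rpow_of_nonpos (by linarith [hr.2]) (by linarith) (by linarith))
  refine (abs_integral_mul_le_mul_integral hmu.le
    ((intervalIntegrable_sub_rpow hd0 u m u).sub (intervalIntegrable_sub_rpow hd0 v m u))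
    hw0 hg).trans (mul_le_mul_of_nonneg_left ?_ hK)
  rw [integral_sub (intervalIntegrable_sub_rpow hd0 u m u) (intervalIntegrable_sub_rpow hd0 v m u),
    integral_sub_rpow hd0, integral_sub_rpow hd0, sub_self, zero_rpow hd0.ne', ← sub_div]
  gcongr
  linarith [rpow_le_rpow (by linarith) (by linarith : u - m ≤ v - m) hd0.le]

theorem abs_integral_rpow_sub_rpow_mul_le_of_le_sub (hd1 : d ≤ 1) {g : ℝ → ℝ}
    {p q u v w B : ℝ} (hpq : p ≤ q) (huv : u ≤ v) (hw : 0 < w) (hwq : w ≤ u - q)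
    (hB : ∀ r, |g r| ≤ B) :
    |∫ r in p..q, ((v - r) ^ (d - 1) - (u - r) ^ (d - 1)) * g r| ≤
      (1 - d) * w ^ (d - 2) * (v - u) * B * (q - p) := by
  have hpt : ∀ r ∈ uIoc p q, ‖((v - r) ^ (d - 1) - (u - r) ^ (d - 1)) * g r‖ ≤
      (1 - d) * w ^ (d - 2) * (v - u) * B := by
    intro r hr
    rw [uIoc_of_le hpq] at hr
    have hwr : w ≤ u - r := by linarith [hr.2]
    have hmvt := abs_rpow_sub_rpow_le (p := d - 1) (by linarith) (hw.trans_le hwr)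
      (by linarith : u - r ≤ v - r)
    rw [abs_of_nonpos (by linarith : d - 1 ≤ 0), show d - 1 - 1 = d - 2 by ring,
      show v - r - (u - r) = v - u by ring] at hmvt
    have hpow : (u - r) ^ (d - 2) ≤ w ^ (d - 2) := rpow_le_rpow_of_nonpos hw hwr (by linarith)
    rw [norm_mul, norm_eq_abs, norm_eq_abs]
    refine mul_le_mul (hmvt.trans ?_) (hB r) (abs_nonneg _) (by positivity)
    have : 0 ≤ v - u := by linarith
    have : 0 ≤ 1 - d := by linarith
    simp only [neg_sub]
    gcongr
  simpa [abs_of_nonneg (sub_nonneg.2 hpq)] using norm_integral_le_of_norm_le_const hpt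

end Kernel

section RLIntegral

variable {d B : ℝ} {f : ℝ → ℝ}

theorem rlIntegral_sub_rlIntegral (hd : 0 < d) (hf : Measurable f) (hB : ∀ r, |f r| ≤ B)
    (m u v : ℝ) :
    rlIntegral d f v - rlIntegral d f u =
      (∫ r in u..v, (v - r) ^ (d - 1) * f r)
        - (∫ r in m..u, ((u - r) ^ (d - 1) - (v - r) ^ (d - 1)) * f r)
        + ∫ r in (0:ℝ)..m, ((v - r) ^ (d - 1) - (u - r) ^ (d - 1)) * f r := by
  have I := intervalIntegrable_sub_rpow_mul hd hf hB
  simp only [rlIntegral, sub_mul]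
  rw [integral_sub (I u m u) (I v m u), integral_sub (I v 0 m) (I u 0 m),
    ← integral_add_adjacent_intervals (I v 0 u) (I v u v),
    ← integral_add_adjacent_intervals (I v 0 m) (I v m u),
    ← integral_add_adjacent_intervals (I u 0 m) (I u m u)]
  ring

theorem abs_rlIntegral_sub_le_of_abs_le (hd0 : 0 < d) (hd1 : d ≤ 1) (hf : Measurable f)
    (hB : ∀ r, |f r| ≤ B) {m u v w K₁ K₂ : ℝ} (hm : 0 ≤ m) (hw : 0 < w) (hwu : w ≤ u - m)
    (huv : u ≤ v) (h₁ : ∀ r ∈ Ioo u v, |f r| ≤ K₁) (h₂ : ∀ r ∈ Ioo m u, |f r| ≤ K₂) :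
    |rlIntegral d f v - rlIntegral d f u| ≤
      (K₁ + K₂) * ((v - u) ^ d / d) + (1 - d) * w ^ (d - 2) * (v - u) * B * m := by
  have e₁ := abs_integral_sub_rpow_mul_le hd0 huv h₁
  have e₂ := abs_integral_rpow_sub_rpow_mul_le hd0 hd1 (by linarith) huv h₂
  have e₃ := abs_integral_rpow_sub_rpow_mul_le_of_le_sub hd1 hm huv hw (by linarith) hB
  rw [sub_zero] at e₃
  rw [rlIntegral_sub_rlIntegral hd0 hf hB m u v]
  refine ((abs_add_le _ _).trans (add_le_add (abs_sub _ _) le_rfl)).trans ?_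
  linarith

theorem rlIntegral_eq_sub_const (hd : 0 < d) (hf : Measurable f) (hB : ∀ r, |f r| ≤ B)
    (c t : ℝ) : rlIntegral d f t = rlIntegral d (fun r => f r - c) t + c * (t ^ d / d) := by
  simp only [rlIntegral, mul_sub]
  rw [integral_sub (intervalIntegrable_sub_rpow_mul hd hf hB t 0 t)
    ((intervalIntegrable_sub_rpow hd t 0 t).mul_const c), intervalIntegral.integral_mul_const,
    integral_sub_rpow hd, sub_zero, sub_self, zero_rpow hd.ne', sub_zero]
  ring

theorem abs_rlIntegral_sub_le (hd0 : 0 < d) (hd1 : d ≤ 1) (hf : Measurable f)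
    (hB : ∀ r, |f r| ≤ B) {c m u v w K₁ K₂ : ℝ} (hm : 0 ≤ m) (hw : 0 < w) (hwu : w ≤ u - m)
    (huv : u ≤ v) (h₁ : ∀ r ∈ Ioo u v, |f r - c| ≤ K₁) (h₂ : ∀ r ∈ Ioo m u, |f r - c| ≤ K₂) :
    |rlIntegral d f v - rlIntegral d f u| ≤ (K₁ + K₂) * ((v - u) ^ d / d) +
      ((1 - d) * w ^ (d - 2) * (B + |c|) * m + |c| * w ^ (d - 1)) * (v - u) := by
  have hg : ∀ r, |f r - c| ≤ B + |c| := fun r => (abs_sub _ _).trans (add_le_add (hB r) le_rfl)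
  have hshift := abs_rlIntegral_sub_le_of_abs_le hd0 hd1 (hf.sub_const c) hg hm hw hwu huv h₁ h₂
  have hpow : |v ^ d - u ^ d| ≤ d * w ^ (d - 1) * (v - u) := by
    refine (abs_rpow_sub_rpow_le hd1 (by linarith) huv).trans ?_
    rw [abs_of_pos hd0]
    have : u ^ (d - 1) ≤ w ^ (d - 1) := rpow_le_rpow_of_nonpos hw (by linarith) (by linarith)
    have : 0 ≤ v - u := by linarith
    gcongr
  have hconst : |c * (v ^ d / d) - c * (u ^ d / d)| ≤ |c| * w ^ (d - 1) * (v - u) := by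
    rw [← mul_sub, ← sub_div, abs_mul, abs_div, abs_of_pos hd0, mul_assoc]
    gcongr
    rwa [div_le_iff₀ hd0, mul_comm, ← mul_assoc]
  rw [rlIntegral_eq_sub_const hd0 hf hB c v, rlIntegral_eq_sub_const hd0 hf hB c u]
  calc _ ≤ |rlIntegral d (fun r => f r - c) v - rlIntegral d (fun r => f r - c) u|
        + |c * (v ^ d / d) - c * (u ^ d / d)| := by
        rw [add_sub_add_comm]; exact abs_add_le _ _
    _ ≤ _ := by linarith

end RLIntegral

theorem eventually_mul_le_mul_rpow {d : ℝ} (hd : d < 1) (C : ℝ) {ε : ℝ} (hε : 0 < ε) :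
    ∀ᶠ h in 𝓝[>] 0, C * h ≤ ε * h ^ d := by
  have hlim : Tendsto (fun h : ℝ => |C| * h ^ (1 - d)) (𝓝[>] 0) (𝓝 0) := by
    have := ((continuousAt_rpow_const 0 (1 - d) (Or.inr (by linarith))).tendsto.const_mul |C|)
    rw [zero_rpow (by linarith), mul_zero] at this
    exact this.mono_left nhdsWithin_le_nhds
  filter_upwards [hlim.eventually_le_const hε, self_mem_nhdsWithin] with h hsmall (hh : 0 < h)
  calc C * h ≤ |C| * h ^ (1 - d) * h ^ d := by
        rw [mul_assoc, ← rpow_add hh, sub_add_cancel, rpow_one]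
        exact mul_le_mul_of_nonneg_right (le_abs_self C) hh.le
    _ ≤ ε * h ^ d := mul_le_mul_of_nonneg_right hsmall (rpow_nonneg hh.le _)

theorem eventually_nhds_zero_of_nhdsGT {p : ℝ → Prop} (h₀ : p 0)
    (hpos : ∀ᶠ h in 𝓝[>] 0, p h) (hneg : ∀ᶠ h in 𝓝[>] 0, p (-h)) : ∀ᶠ δ in 𝓝 0, p δ := by
  rw [← nhdsNE_sup_pure, ← nhdsLT_sup_nhdsGT, eventually_sup, eventually_sup]
  refine ⟨⟨?_, hpos⟩, h₀⟩
  have hmap : Tendsto Neg.neg (𝓝[<] (0:ℝ)) (𝓝[>] 0) := by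
    simpa using tendsto_neg_nhdsLT_neg (a := (0:ℝ))
  simpa only [neg_neg] using hmap.eventually hneg

theorem eventually_abs_rlIntegral_sub_le {d B t L ε : ℝ} {f : ℝ → ℝ} (hd0 : 0 < d) (hd1 : d < 1)
    (hf : Measurable f) (hB : ∀ r, |f r| ≤ B) (ht : 0 < t)
    (hrc : Tendsto f (𝓝[≥] t) (𝓝 (f t))) (hll : Tendsto f (𝓝[<] t) (𝓝 L)) (hε : 0 < ε) :
    ∀ᶠ δ in 𝓝 0, |rlIntegral d f (t + δ) - rlIntegral d f t| ≤
      (|f t - L| + ε) * (|δ| ^ d / d) := by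
  obtain ⟨η, hη, rfl⟩ : ∃ η, 0 < η ∧ ε = 3 * η := ⟨ε / 3, by positivity, by ring⟩
  obtain ⟨m, hm, hmt, hnear⟩ : ∃ m, 0 ≤ m ∧ m < t ∧ ∀ r ∈ Ioo m t, |f r - L| ≤ η := by
    obtain ⟨m₀, hm₀, hleft⟩ :=
      (nhdsLT_basis t).tendsto_left_iff.1 hll _ (Metric.closedBall_mem_nhds L hη)
    exact ⟨max m₀ 0, le_max_right _ _, max_lt hm₀ ht,
      fun r hr => hleft ⟨(le_max_left _ _).trans_lt hr.1, hr.2⟩⟩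
  obtain ⟨b, hb, hright⟩ :=
    (nhdsGE_basis t).tendsto_left_iff.1 hrc _ (Metric.closedBall_mem_nhds (f t) hη)
  set w := (t - m) / 2 with hw_def
  have hw : 0 < w := by positivity
  set C := (1 - d) * w ^ (d - 2) * (B + |L|) * m + |L| * w ^ (d - 1)
  have hclose : ∀ K h, 0 < h → K ≤ |f t - L| + 2 * η → C * h ≤ η * h ^ d →
      K * (h ^ d / d) + C * h ≤ (|f t - L| + 3 * η) * (h ^ d / d) := fun K h hh hK hCh => by
    have : h ^ d ≤ h ^ d / d := le_div_self (by positivity) hd0 hd1.le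
    have : 0 ≤ h ^ d / d := by positivity
    nlinarith
  refine eventually_nhds_zero_of_nhdsGT (by simp [zero_rpow hd0.ne']) ?_ ?_
  · filter_upwards [eventually_mul_le_mul_rpow hd1 C hη, self_mem_nhdsWithin,
      Ioo_mem_nhdsGT (sub_pos.2 hb)] with h hCh (hh : 0 < h) hhb
    have hjump : ∀ r ∈ Ioo t (t + h), |f r - L| ≤ |f t - L| + η := fun r hr => by
      have := hright ⟨hr.1.le, by linarith [hr.2, hhb.2]⟩
      rw [Metric.mem_closedBall, dist_eq_norm, norm_eq_abs] at this
      linarith [abs_sub_le (f r) (f t) L]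
    have := abs_rlIntegral_sub_le hd0 hd1.le hf hB hm hw (by linarith)
      (by linarith : t ≤ t + h) hjump hnear
    rw [add_sub_cancel_left] at this
    rw [abs_of_pos hh]
    exact this.trans (hclose _ h hh (by linarith) hCh)
  · filter_upwards [eventually_mul_le_mul_rpow hd1 C hη, self_mem_nhdsWithin,
      Ioo_mem_nhdsGT hw] with h hCh (hh : 0 < h) hhw
    have := abs_rlIntegral_sub_le hd0 hd1.le hf hB hm hw (by linarith [hhw.2])
      (by linarith : t - h ≤ t) (fun r hr => hnear r ⟨by linarith [hr.1, hhw.2], hr.2⟩)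
      (fun r hr => hnear r ⟨hr.1, by linarith [hr.2]⟩)
    rw [sub_sub_cancel] at this
    rw [abs_neg, abs_of_pos hh, ← sub_eq_add_neg, abs_sub_comm]
    exact this.trans (hclose _ h hh (by linarith [abs_nonneg (f t - L)]) hCh)

theorem exists_bounded_measurable_eqOn_of_cadlag {f g : ℝ → ℝ}
    (hrc : ∀ s, Tendsto f (𝓝[≥] s) (𝓝 (f s))) (hll : ∀ s, Tendsto f (𝓝[<] s) (𝓝 (g s)))
    {K : Set ℝ} (hK : IsCompact K) :
    ∃ F : ℝ → ℝ, Measurable F ∧ (∃ B, ∀ r, |F r| ≤ B) ∧ EqOn F f K := by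
  obtain ⟨B, hB⟩ := bddAbove_abs_image_of_cadlag hrc hll hK
  refine ⟨K.indicator f, (measurable_of_forall_continuousWithinAt_Ici hrc).indicator
    hK.measurableSet, ⟨max B 0, fun r => ?_⟩, fun r hr => indicator_of_mem hr f⟩
  by_cases hr : r ∈ K
  · rw [indicator_of_mem hr]; exact (hB (mem_image_of_mem _ hr)).trans (le_max_left _ _)
  · rw [indicator_of_notMem hr, abs_zero]; exact le_max_right _ _

theorem exists_abs_rlIntegral_sub_le_of_cadlag {d t C : ℝ} {f g : ℝ → ℝ} (hd0 : 0 < d)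
    (hd1 : d < 1) (hrc : ∀ s, Tendsto f (𝓝[≥] s) (𝓝 (f s)))
    (hll : ∀ s, Tendsto f (𝓝[<] s) (𝓝 (g s))) (ht : t ∈ Ioo 0 1)
    (hC : 1 / Gamma (d + 1) * |f t - g t| < C) :
    ∃ δ₁ > 0, ∀ δ ∈ Ioo (-δ₁) δ₁,
      |1 / Gamma d * rlIntegral d f (t + δ) - 1 / Gamma d * rlIntegral d f t| ≤ C * |δ| ^ d := by
  obtain ⟨F, hFm, ⟨B, hFB⟩, hFf⟩ := exists_bounded_measurable_eqOn_of_cadlag hrc hll isCompact_Icc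
  have hFf_int : ∀ s ∈ Icc (0:ℝ) 1, rlIntegral d F s = rlIntegral d f s := fun s hs =>
    integral_congr fun r hr => by
      rw [uIcc_of_le hs.1] at hr
      rw [hFf ⟨hr.1, hr.2.trans hs.2⟩]
  have hFt : F =ᶠ[𝓝 t] f := eventually_of_mem (Icc_mem_nhds ht.1 ht.2) hFf
  have hε : 0 < C * Gamma (d + 1) - |f t - g t| := by
    rw [Gamma_add_one hd0.ne'] at hC ⊢
    rw [one_div_mul_eq_div, div_lt_iff₀ (by positivity)] at hC
    linarith
  have hnear := eventually_abs_rlIntegral_sub_le hd0 hd1 hFm hFB ht.1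
    (by rw [hFt.eq_of_nhds]; exact (hrc t).congr' (hFt.symm.filter_mono nhdsWithin_le_nhds))
    ((hll t).congr' (hFt.symm.filter_mono nhdsWithin_le_nhds)) hε
  have hmem : ∀ᶠ δ in 𝓝 (0:ℝ), t + δ ∈ Icc (0:ℝ) 1 :=
    ((continuous_const.add continuous_id).tendsto' 0 t (add_zero t)).eventually
      (Icc_mem_nhds ht.1 ht.2)
  obtain ⟨δ₁, hδ₁, hδ⟩ := Metric.eventually_nhds_iff.1 (hnear.and hmem)
  refine ⟨δ₁, hδ₁, fun δ hδ' => ?_⟩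
  obtain ⟨hle, hδmem⟩ := hδ (by rwa [dist_zero_right, norm_eq_abs, abs_lt])
  rw [← mul_sub, abs_mul, abs_of_pos (by positivity), ← hFf_int _ hδmem,
    ← hFf_int t (Ioo_subset_Icc_self ht)]
  rw [hFt.eq_of_nhds] at hle
  calc 1 / Gamma d * |rlIntegral d F (t + δ) - rlIntegral d F t|
      ≤ 1 / Gamma d * ((|f t - g t| + (C * Gamma (d + 1) - |f t - g t|)) * (|δ| ^ d / d)) := by
        gcongr
    _ = C * |δ| ^ d := by rw [Gamma_add_one hd0.ne']; field_simp; ring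

theorem fractional_holder_restricted_general
    {Ω : Type*} [MeasureSpace Ω]
    (d : ℝ) (hd : d ∈ Set.Ioo (0:ℝ) 1)
    (X Xm M : ℝ → Ω → ℝ)
    (hXrc : ∀ᵐ ω ∂(ℙ : Measure Ω), ∀ s : ℝ,
      Tendsto (fun u => X u ω) (nhdsWithin s (Set.Ici s)) (nhds (X s ω)))
    (hXll : ∀ᵐ ω ∂(ℙ : Measure Ω), ∀ s : ℝ,
      Tendsto (fun u => X u ω) (nhdsWithin s (Set.Iio s)) (nhds (Xm s ω)))
    (hM : ∀ᵐ ω ∂(ℙ : Measure Ω), ∀ t : ℝ,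
      M t ω = (1 / Real.Gamma d) * ∫ r in (0:ℝ)..t, (t - r) ^ (d - 1) * X r ω) :
    ∀ᵐ ω ∂(ℙ : Measure Ω), ∀ t ∈ Set.Ioo (0:ℝ) 1,
      (∃ δ₁ > (0:ℝ), ∃ C₁ : ℝ, ∀ δ ∈ Set.Ioo (-δ₁) δ₁,
        |M (t + δ) ω - M t ω| ≤ C₁ * |δ| ^ d) ∧
      ∀ C₁ : ℝ,
        (1 / Real.Gamma (d + 1)) *
            sSup {y : ℝ | ∃ s ∈ Set.Icc (0:ℝ) 1, y = |X s ω - Xm s ω|} < C₁ →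
        ∃ δ₁ > (0:ℝ), ∀ δ ∈ Set.Ioo (-δ₁) δ₁,
          |M (t + δ) ω - M t ω| ≤ C₁ * |δ| ^ d := by
  filter_upwards [hXrc, hXll, hM] with ω hrc hll hMω t ht
  have hjump := le_csSup (bddAbove_abs_jump_of_cadlag hrc hll isCompact_Icc)
    ⟨t, Ioo_subset_Icc_self ht, rfl⟩
  have hΓ : 0 ≤ 1 / Gamma (d + 1) := (one_div_pos.2 (Gamma_pos_of_pos (by linarith [hd.1]))).le
  have hbound : ∀ C₁, 1 / Gamma (d + 1) * |X t ω - Xm t ω| < C₁ →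
      ∃ δ₁ > (0:ℝ), ∀ δ ∈ Ioo (-δ₁) δ₁, |M (t + δ) ω - M t ω| ≤ C₁ * |δ| ^ d := fun C₁ hC₁ => by
    simp only [hMω]
    exact exists_abs_rlIntegral_sub_le_of_cadlag hd.1 hd.2 hrc hll ht hC₁
  exact ⟨(hbound _ (lt_add_one _)).imp fun δ₁ h => ⟨h.1, _, h.2⟩,
    fun C₁ hC₁ => hbound C₁ ((mul_le_mul_of_nonneg_left hjump hΓ).trans_lt hC₁)⟩

/-- Hölder continuity of order `d` for the restricted fractional
process: `d ∈ (0,1)`, `X` a semimartingale with càdlàg paths, left limits `Xm`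
and `X(0) = X(0−) = 0` a.s., and
`M(t) = (1/Γ(d+1)) ∫₀ᵗ (t−s)^d dX(s) = (1/Γ(d)) ∫₀ᵗ (t−r)^{d−1} X(r) dr`
(pathwise representation via Lemma 1).  Then a.s., for every `t ∈ (0,1)` and
every `C₁ > (1/Γ(d+1)) sup_{s∈[0,1]} |Δ_X(s)|`, there is `δ₁ > 0` with
`|M(t+δ) − M(t)| ≤ C₁|δ|^d` for all `δ ∈ (−δ₁, δ₁)`. -/
theorem fractional_holder_restricted
    {Ω : Type*} [MeasureSpace Ω] [IsProbabilityMeasure (ℙ : Measure Ω)]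
    (d : ℝ) (hd : d ∈ Set.Ioo (0:ℝ) 1)
    (X Xm M : ℝ → Ω → ℝ)
    (hXrc : ∀ᵐ ω ∂(ℙ : Measure Ω), ∀ s : ℝ,
      Tendsto (fun u => X u ω) (nhdsWithin s (Set.Ici s)) (nhds (X s ω)))
    (hXll : ∀ᵐ ω ∂(ℙ : Measure Ω), ∀ s : ℝ,
      Tendsto (fun u => X u ω) (nhdsWithin s (Set.Iio s)) (nhds (Xm s ω)))
    (hX0 : ∀ᵐ ω ∂(ℙ : Measure Ω), X 0 ω = 0 ∧ Xm 0 ω = 0)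
    (hM : ∀ᵐ ω ∂(ℙ : Measure Ω), ∀ t : ℝ,
      M t ω = (1 / Real.Gamma d) * ∫ r in (0:ℝ)..t, (t - r) ^ (d - 1) * X r ω) :
    ∀ᵐ ω ∂(ℙ : Measure Ω), ∀ t ∈ Set.Ioo (0:ℝ) 1,
      (∃ δ₁ > (0:ℝ), ∃ C₁ : ℝ, ∀ δ ∈ Set.Ioo (-δ₁) δ₁,
        |M (t + δ) ω - M t ω| ≤ C₁ * |δ| ^ d) ∧
      ∀ C₁ : ℝ,
        (1 / Real.Gamma (d + 1)) *
            sSup {y : ℝ | ∃ s ∈ Set.Icc (0:ℝ) 1, y = |X s ω - Xm s ω|} < C₁ →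
        ∃ δ₁ > (0:ℝ), ∀ δ ∈ Set.Ioo (-δ₁) δ₁,
          |M (t + δ) ω - M t ω| ≤ C₁ * |δ| ^ d :=
  fractional_holder_restricted_general d hd X Xm M hXrc hXll hM
end

section
/- Sign structure of the kernel ratios near the diagonal: Let d ∈ (0,1) and f ∈ SD²_{d−1}(0+). Then there exists h₁ > 0 such that for all δ ∈ (0, h₁), all v ∈ (0, h₁/(2δ)), and all s ∈ [0,1]: g_δ(s,v) = [f(s+δ, s−δv) − f(s, s−δv)]/f(s+δ, s) ≤ 0 and f_δ(s,v) = f(s+δ, s+δ−δv)/f(s+δ, s) ≥ 0. -/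
open MeasureTheory ProbabilityTheory Filter Set intervalIntegral Real

/-!
Near the diagonal `h * ∂ᵣF(t, t - h) / F(t, t - h) → -d < 0` and
`h² * ∂ₜ∂ᵣF(t, t - h) / F(t, t - h) → d (1 - d) > 0` uniformly in `t`, and `F > 0` there, so
`f = ∂ᵣF` is negative and `∂ₜ f` is positive in a band below the diagonal. The first makes every
numerator and denominator of `f_δ` negative; the second makes `t ↦ f(t, r)` increasing on the band,
so the numerator of `g_δ` is nonnegative over a negative denominator.
-/

section Derivatives

variable {F : ℝ → ℝ → ℝ} {U : Set (ℝ × ℝ)}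

lemma p01_eq_fderiv (hF : ContDiffOn ℝ 1 (fun p : ℝ × ℝ => F p.1 p.2) U) (hU : IsOpen U)
    {t r : ℝ} (htr : (t, r) ∈ U) :
    p01 F t r = fderiv ℝ (fun p : ℝ × ℝ => F p.1 p.2) (t, r) (0, 1) := by
  have hdiff : DifferentiableAt ℝ (fun p : ℝ × ℝ => F p.1 p.2) (t, r) :=
    (hF.differentiableOn one_ne_zero).differentiableAt (hU.mem_nhds htr)
  have hline : HasDerivAt (fun x : ℝ => (t, x)) ((0 : ℝ), (1 : ℝ)) r :=
    (hasDerivAt_const r t).prodMk (hasDerivAt_id r)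
  simpa [p01, Function.comp_def] using (hdiff.hasFDerivAt.comp_hasDerivAt r hline).deriv

lemma hasDerivAt_p01_left (hF : ContDiffOn ℝ 2 (fun p : ℝ × ℝ => F p.1 p.2) U) (hU : IsOpen U)
    {t r : ℝ} (htr : (t, r) ∈ U) :
    HasDerivAt (fun x => p01 F x r) (p11 F t r) t := by
  have hdiffOn : DifferentiableOn ℝ
      (fun p : ℝ × ℝ => fderiv ℝ (fun q : ℝ × ℝ => F q.1 q.2) p ((0 : ℝ), (1 : ℝ))) U :=
    ((hF.fderiv_of_isOpen hU (by norm_num)).clm_apply contDiffOn_const).differentiableOn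
      one_ne_zero
  have hdiff : DifferentiableAt ℝ
      (fun x : ℝ => fderiv ℝ (fun q : ℝ × ℝ => F q.1 q.2) (x, r) ((0 : ℝ), (1 : ℝ))) t :=
    (hdiffOn.differentiableAt (hU.mem_nhds htr)).comp (f := fun x : ℝ => (x, r)) t
      ((differentiableAt_id (x := t)).prodMk (differentiableAt_const r))
  have heq : (fun x => p01 F x r) =ᶠ[nhds t]
      fun x => fderiv ℝ (fun q : ℝ × ℝ => F q.1 q.2) (x, r) ((0 : ℝ), (1 : ℝ)) := by
    filter_upwards [(hU.preimage (Continuous.prodMk_left r)).mem_nhds htr] with x hx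
    exact p01_eq_fderiv (hF.of_le (by norm_num)) hU hx
  exact (hdiff.congr_of_eventuallyEq heq).hasDerivAt

lemma p01_le_p01_of_p11_nonneg (hF : ContDiffOn ℝ 2 (fun p : ℝ × ℝ => F p.1 p.2) U)
    (hU : IsOpen U) {r a b : ℝ} (hab : a ≤ b) (hU_mem : ∀ x ∈ Icc a b, (x, r) ∈ U)
    (hp11 : ∀ x ∈ Ioo a b, 0 ≤ p11 F x r) :
    p01 F a r ≤ p01 F b r := by
  have hderiv : ∀ x ∈ Icc a b, HasDerivAt (fun x => p01 F x r) (p11 F x r) x :=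
    fun x hx => hasDerivAt_p01_left hF hU (hU_mem x hx)
  have hmono : MonotoneOn (fun x => p01 F x r) (Icc a b) := by
    refine monotoneOn_of_deriv_nonneg (convex_Icc a b)
      (fun x hx => (hderiv x hx).continuousAt.continuousWithinAt) ?_ ?_ <;>
      rw [interior_Icc]
    · exact fun x hx => (hderiv x (Ioo_subset_Icc_self hx)).differentiableAt.differentiableWithinAt
    · exact fun x hx => (hderiv x (Ioo_subset_Icc_self hx)).deriv ▸ hp11 x hx
  exact hmono (left_mem_Icc.2 hab) (right_mem_Icc.2 hab) hab

end Derivatives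

section SignNearDiagonal

variable {G : ℝ → ℝ → ℝ} {c : ℝ} {K : Set ℝ}

lemma UnifDiagLimit.exists_neg (hG : UnifDiagLimit G c) (hc : 0 < c) (hK : IsCompact K) :
    ∃ h₀ > 0, ∀ h : ℝ, 0 < h → h < h₀ → ∀ t ∈ K, G h t < 0 := by
  obtain ⟨h₀, hh₀, hlim⟩ := hG K hK c hc
  exact ⟨h₀, hh₀, fun h hh hlt t ht => by linarith [(abs_lt.1 (hlim h hh hlt t ht)).2]⟩

lemma UnifDiagLimit.exists_pos (hG : UnifDiagLimit G c) (hc : c < 0) (hK : IsCompact K) :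
    ∃ h₀ > 0, ∀ h : ℝ, 0 < h → h < h₀ → ∀ t ∈ K, 0 < G h t := by
  obtain ⟨h₀, hh₀, hlim⟩ := hG K hK (-c) (neg_pos.2 hc)
  exact ⟨h₀, hh₀, fun h hh hlt t ht => by linarith [(abs_lt.1 (hlim h hh hlt t ht)).1]⟩

variable {F : ℝ → ℝ → ℝ} {ρ : ℝ}

lemma SmoothVar.exists_p01_neg (hF : SmoothVar F ρ) (hρ : 0 < ρ) (hK : IsCompact K) :
    ∃ h₀ > 0, ∀ h : ℝ, 0 < h → h < h₀ → ∀ t ∈ K, p01 F t (t - h) < 0 := by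
  obtain ⟨h₀, hh₀, hneg⟩ := hF.2.2.2.1.exists_neg hρ hK
  refine ⟨h₀, hh₀, fun h hh hlt t ht => lt_of_not_ge fun hp => ?_⟩
  have hFpos : 0 < F t (t - h) := hF.2.2.1 t (t - h) (by linarith)
  exact (hneg h hh hlt t ht).not_ge (div_nonneg (mul_nonneg hh.le hp) hFpos.le)

lemma SmoothVar.exists_p11_pos (hF : SmoothVar F ρ) (hρ₀ : 0 < ρ) (hρ₁ : ρ < 1)
    (hK : IsCompact K) :
    ∃ h₀ > 0, ∀ h : ℝ, 0 < h → h < h₀ → ∀ t ∈ K, 0 < p11 F t (t - h) := by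
  obtain ⟨h₀, hh₀, hpos⟩ := hF.2.2.2.2.2.1.exists_pos
    (mul_neg_of_pos_of_neg hρ₀ (sub_neg.2 hρ₁)) hK
  refine ⟨h₀, hh₀, fun h hh hlt t ht => lt_of_not_ge fun hp => ?_⟩
  have hFpos : 0 < F t (t - h) := hF.2.2.1 t (t - h) (by linarith)
  exact (hpos h hh hlt t ht).not_ge
    (div_nonpos_of_nonpos_of_nonneg (mul_nonpos_of_nonneg_of_nonpos (by positivity) hp) hFpos.le)

end SignNearDiagonal

/-- sign structure near the diagonal, eqs. (42)–(43): for
`f ∈ SD²_{d−1}(0+)`, `d ∈ (0,1)`, there is `h₁ > 0` such that for all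
`δ ∈ (0,h₁)`, `v ∈ (0, h₁/(2δ))` and `s ∈ [0,1]`: `g_δ(s,v) ≤ 0` and
`f_δ(s,v) ≥ 0`. -/
theorem sign_structure (d : ℝ) (hd : d ∈ Set.Ioo (0:ℝ) 1)
    (F : ℝ → ℝ → ℝ) (hF : SmoothVar F d)
    (f : ℝ → ℝ → ℝ) (hf : ∀ t r : ℝ, f t r = p01 F t r) :
    ∃ h₁ > (0:ℝ), ∀ δ : ℝ, 0 < δ → δ < h₁ →
      ∀ v : ℝ, 0 < v → v < h₁ / (2 * δ) → ∀ s ∈ Set.Icc (0:ℝ) 1,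
        (f (s + δ) (s - δ * v) - f s (s - δ * v)) / f (s + δ) s ≤ 0 ∧
        0 ≤ f (s + δ) (s + δ - δ * v) / f (s + δ) s := by
  have hK : IsCompact (Icc (0:ℝ) 2) := isCompact_Icc
  obtain ⟨h₀₁, hh₀₁, hp01⟩ := hF.exists_p01_neg hd.1 hK
  obtain ⟨h₀₂, hh₀₂, hp11⟩ := hF.exists_p11_pos hd.1 hd.2 hK
  set h₀ := min (min h₀₁ h₀₂) 1
  have h₀_le₁ : h₀ ≤ h₀₁ := (min_le_left _ _).trans (min_le_left _ _)
  have h₀_le₂ : h₀ ≤ h₀₂ := (min_le_left _ _).trans (min_le_right _ _)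
  have h₀_le_one : h₀ ≤ 1 := min_le_right _ _
  refine ⟨h₀ / 2, by positivity, fun δ hδ hδh₁ v hv hvh₁ s ⟨hs₀, hs₁⟩ => ?_⟩
  have hδv : δ * v < h₀ / 4 := by
    have := (lt_div_iff₀ (by positivity : (0:ℝ) < 2 * δ)).1 hvh₁
    nlinarith
  have hδv₀ : 0 < δ * v := mul_pos hδ hv
  have hden : f (s + δ) s < 0 := by
    simpa [hf] using hp01 δ hδ (by linarith) (s + δ) ⟨by linarith, by linarith⟩
  have hnum₂ : f (s + δ) (s + δ - δ * v) < 0 := by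
    simpa [hf] using hp01 (δ * v) hδv₀ (by linarith) (s + δ) ⟨by linarith, by linarith⟩
  have hnum₁ : f s (s - δ * v) ≤ f (s + δ) (s - δ * v) := by
    rw [hf, hf]
    refine p01_le_p01_of_p11_nonneg hF.2.1 (isOpen_lt continuous_snd continuous_fst)
      (by linarith) (fun x hx => show s - δ * v < x by linarith [hx.1]) fun x hx => ?_
    simpa using (hp11 (x - (s - δ * v)) (by linarith [hx.1]) (by linarith [hx.2]) x
      ⟨by linarith [hx.1], by linarith [hx.2]⟩).le
  exact ⟨div_nonpos_of_nonneg_of_nonpos (sub_nonneg.2 hnum₁) hden.le,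
    div_nonneg_of_nonpos hnum₂.le hden.le⟩
end
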